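/- arXiv:2306.14278 — 11 statements merged into one kernel-verified Lean document; each statement's English description precedes it below -/
import Mathlib

section
/- Let Γ be a group whose every non-trivial element has infinite conjugacy class (i.c.c.), and let F be a finite subset of Γ not containing the identity. Then there exists t ∈ Γ such that tFt⁻¹ ∩ F = ∅. -/
/-!
If every `t ∈ G` moved some `f ∈ F` back into `F`, then `G` would be the union of the finitely
many sets `{t | t f t⁻¹ = f'}` with `f, f' ∈ F`, each empty or a left coset of the centralizer
of `f`. By B. H. Neumann's lemma one of these centralizers has finite index, so the conjugacy
class of that `f ≠ 1` is finite.
-/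

open scoped Pointwise

namespace Subgroup

variable {G : Type*} [Group G]

theorem finite_setOf_isConj_of_finiteIndex_centralizer {f : G}
    [(centralizer {f}).FiniteIndex] : {g : G | IsConj f g}.Finite := by
  have horbit : {g : G | IsConj f g} = MulAction.orbit (ConjAct G) f := by
    ext g
    rw [Set.mem_ofPred_eq, ConjAct.mem_orbit_conjAct, isConj_comm]
  have horbitEquiv : MulAction.orbit (ConjAct G) f ≃ G ⧸ centralizer {f} :=
    (MulAction.orbitEquivQuotientStabilizer (ConjAct G) f).trans
      (quotientEquivOfEq (ConjAct.stabilizer_eq_centralizer f))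
  rw [horbit]
  exact Set.finite_coe_iff.mp (Finite.of_equiv _ horbitEquiv.symm)

theorem mem_leftCoset_centralizer_iff {s t f : G} :
    t ∈ s • (centralizer {f} : Set G) ↔ t * f * t⁻¹ = s * f * s⁻¹ := by
  rw [mem_leftCoset_iff, SetLike.mem_coe, mem_centralizer_singleton_iff]
  constructor <;> intro h
  · calc t * f * t⁻¹ = s * ((s⁻¹ * t) * f) * t⁻¹ := by group
      _ = s * (f * (s⁻¹ * t)) * t⁻¹ := by rw [h]
      _ = s * f * s⁻¹ := by group
  · calc s⁻¹ * t * f = s⁻¹ * (t * f * t⁻¹) * t := by group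
      _ = s⁻¹ * (s * f * s⁻¹) * t := by rw [h]
      _ = f * (s⁻¹ * t) := by group

theorem exists_leftCoset_centralizer_cover_of_forall_conj_mem {F : Finset G}
    (hF : ∀ t : G, ∃ f ∈ F, t * f * t⁻¹ ∈ F) :
    ∃ g : G × G → G, ⋃ p ∈ F ×ˢ F, g p • (centralizer {p.1} : Set G) = Set.univ := by
  refine ⟨fun p => Classical.epsilon fun s => s * p.1 * s⁻¹ = p.2, ?_⟩
  refine Set.eq_univ_of_forall fun t => ?_
  obtain ⟨f, hf, hft⟩ := hF t
  refine Set.mem_biUnion (x := (f, t * f * t⁻¹)) (Finset.mem_product.mpr ⟨hf, hft⟩) ?_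
  exact mem_leftCoset_centralizer_iff.mpr (Classical.epsilon_spec
    (p := fun s => s * f * s⁻¹ = t * f * t⁻¹) ⟨t, rfl⟩).symm

end Subgroup

/-- If every nontrivial element of `G` has an infinite conjugacy class (i.c.c.),
then for every finite subset `F` of `G` not containing the identity there is `t ∈ G`
with `tFt⁻¹ ∩ F = ∅`. -/
theorem stmt0 {G : Type*} [Group G]
    (hicc : ∀ g : G, g ≠ 1 → {h : G | IsConj g h}.Infinite)
    (F : Finset G) (hF : (1 : G) ∉ F) :
    ∃ t : G, ∀ f ∈ F, t * f * t⁻¹ ∉ F := by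
  by_contra! hconj
  obtain ⟨g, hcover⟩ := Subgroup.exists_leftCoset_centralizer_cover_of_forall_conj_mem hconj
  obtain ⟨p, hp, hfin⟩ := Subgroup.exists_finiteIndex_of_leftCoset_cover hcover
  have hp₁ : p.1 ∈ F := (Finset.mem_product.mp hp).1
  exact hicc p.1 (ne_of_mem_of_not_mem hp₁ hF)
    (Subgroup.finite_setOf_isConj_of_finiteIndex_centralizer)
end

section
/- Every finitely generated subgroup of the FC-center of a group Γ is virtually abelian, i.e., contains an abelian subgroup of finite index. -/
private lemma centralizer_finiteIndex_of_finite_conj {G : Type*} [Group G] (g : G)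
    (h : {x : G | IsConj g x}.Finite) : (Subgroup.centralizer {g}).FiniteIndex := by
  rw [Subgroup.centralizer_eq_comap_stabilizer]
  have h1 : (MulAction.stabilizer (ConjAct G) g).index = (MulAction.orbit (ConjAct G) g).ncard :=
    MulAction.index_stabilizer _ _
  have horb : MulAction.orbit (ConjAct G) g = {x : G | IsConj g x} := by
    ext x
    rw [Set.mem_setOf_eq, ConjAct.mem_orbit_conjAct]
    exact isConj_comm
  have hfi : (MulAction.stabilizer (ConjAct G) g).FiniteIndex := by
    constructor
    rw [h1, horb]
    exact Set.ncard_ne_zero_of_mem (show g ∈ {x : G | IsConj g x} from IsConj.refl g) h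
  constructor
    <;> erw [Subgroup.index_comap_of_surjective _ (MulEquiv.surjective _)]
  exact hfi.1

/-- Every finitely generated subgroup of the FC-center of a group is virtually abelian:
it contains an abelian subgroup of finite index. -/
theorem stmt3 {G : Type*} [Group G] (Δ : Subgroup G) (hfg : Δ.FG)
    (hΔ : ∀ h ∈ Δ, {g : G | IsConj h g}.Finite) :
    ∃ A : Subgroup Δ, A.index ≠ 0 ∧ ∀ a ∈ A, ∀ b ∈ A, a * b = b * a := by
  obtain ⟨S, hS⟩ := hfg
  -- the centralizer of the generating set
  have hcent : Subgroup.centralizer (S : Set G) = ⨅ g ∈ (S : Set G), Subgroup.centralizer {g} := by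
    ext x
    simp only [Subgroup.mem_centralizer_iff, Subgroup.mem_iInf, Set.mem_singleton_iff,
      forall_eq]
  have hCfi : (Subgroup.centralizer (S : Set G)).FiniteIndex := by
    rw [hcent]
    have : ⨅ g ∈ (S : Set G), Subgroup.centralizer {g} = ⨅ g ∈ S, Subgroup.centralizer {g} := by
      simp
    rw [this]
    exact Subgroup.finiteIndex_iInf' _ fun g hg =>
      centralizer_finiteIndex_of_finite_conj g (hΔ g (hS ▸ Subgroup.subset_closure hg))
  refine ⟨(Subgroup.centralizer (S : Set G)).subgroupOf Δ, ?_, ?_⟩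
  · exact (Subgroup.instFiniteIndex_subgroupOf _ _).1
  · rintro ⟨a, haΔ⟩ ha ⟨b, hbΔ⟩ hb
    have hb' : b ∈ Subgroup.centralizer (S : Set G) := hb
    have ha'' : a ∈ Subgroup.centralizer (Subgroup.centralizer (S : Set G) : Set G) := by
      have := Subgroup.closure_le_centralizer_centralizer (S : Set G)
      rw [hS] at this
      exact this haΔ
    have : b * a = a * b := Subgroup.mem_centralizer_iff.mp ha'' b hb'
    exact Subtype.ext this.symm
end

section
/- The FC-center of any group is an amenable group. -/
/-- A discrete group is amenable if it admits a left-invariant, finitely additive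
probability "measure" defined on all subsets. -/
def IsAmenable (G : Type*) [Group G] : Prop :=
  ∃ m : Set G → ℝ,
    (∀ A : Set G, 0 ≤ m A) ∧
    m Set.univ = 1 ∧
    (∀ A B : Set G, Disjoint A B → m (A ∪ B) = m A + m B) ∧
    (∀ (g : G) (A : Set G), m ((g * ·) '' A) = m A)


open Filter Topology Finset

/-- Ultrafilter limits of [0,1]-valued functions exist. -/
lemma exists_ulim {ι : Type*} (u : Ultrafilter ι) (f : ι → ℝ)
    (h : ∀ i, f i ∈ Set.Icc (0:ℝ) 1) :
    ∃ x ∈ Set.Icc (0:ℝ) 1, Filter.Tendsto f u (nhds x) := by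
  have hle : (u.map f : Filter ℝ) ≤ Filter.principal (Set.Icc 0 1) := by
    rw [Filter.le_principal_iff]
    exact Filter.mem_map.2 (Filter.Eventually.of_forall (f := (u : Filter ι)) h)
  obtain ⟨x, hx, hxle⟩ := isCompact_Icc.ultrafilter_le_nhds (u.map f) hle
  exact ⟨x, hx, hxle⟩

/-- Ultrafilter limit of approximately invariant measures gives amenability. -/
lemma isAmenable_limit {G ι : Type*} [Group G] (u : Ultrafilter ι) (μ : ι → Set G → ℝ)
    (h01 : ∀ i A, μ i A ∈ Set.Icc (0:ℝ) 1)
    (huniv : ∀ i, μ i Set.univ = 1)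
    (hadd : ∀ (i : ι) (A B : Set G), Disjoint A B → μ i (A ∪ B) = μ i A + μ i B)
    (hinv : ∀ (g : G) (A : Set G),
      Filter.Tendsto (fun i => μ i ((g * ·) '' A) - μ i A) u (nhds 0)) :
    IsAmenable G := by
  choose m hm hmt using fun A => exists_ulim u (fun i => μ i A) (fun i => h01 i A)
  refine ⟨m, fun A => (hm A).1, ?_, ?_, ?_⟩
  · exact tendsto_nhds_unique (hmt Set.univ)
      (by simpa [huniv] using (tendsto_const_nhds : Tendsto (fun _ : ι => (1:ℝ)) u (nhds 1)))
  · intro A B hAB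
    refine tendsto_nhds_unique (hmt (A ∪ B)) ?_
    have : Tendsto (fun i => μ i A + μ i B) u (nhds (m A + m B)) := (hmt A).add (hmt B)
    exact this.congr (fun i => (hadd i A B hAB).symm)
  · intro g A
    refine tendsto_nhds_unique (hmt ((g * ·) '' A)) ?_
    have : Tendsto (fun i => (μ i ((g * ·) '' A) - μ i A) + μ i A) u (nhds (0 + m A)) :=
      (hinv g A).add (hmt A)
    simpa using this

section Folner
variable {G : Type*} [Group G]

lemma mem_mulimg {g x : G} {A : Set G} : x ∈ (g * ·) '' A ↔ g⁻¹ * x ∈ A := by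
  constructor
  · rintro ⟨a, ha, rfl⟩; simpa using ha
  · intro h; exact ⟨g⁻¹ * x, h, by group⟩

lemma isAmenable_of_folner (F : ℕ → Finset G) (hne : ∀ N, (F N).Nonempty)
    (hF : ∀ g : G, Tendsto
      (fun N => ((((g * ·) '' (F N : Set G)) \ (F N : Set G)).ncard : ℝ) / (F N).card)
      atTop (nhds 0)) :
    IsAmenable G := by
  obtain ⟨u, hu⟩ : ∃ u : Ultrafilter ℕ, (u : Filter ℕ) ≤ atTop :=
    ⟨Ultrafilter.of atTop, Ultrafilter.of_le _⟩
  have hcardpos : ∀ N, (0:ℝ) < (F N).card := fun N => by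
    exact_mod_cast Finset.card_pos.2 (hne N)
  have hfin : ∀ (A : Set G) (N : ℕ), (A ∩ (F N : Set G)).Finite :=
    fun A N => (F N).finite_toSet.inter_of_right A
  refine isAmenable_limit u (fun N A => ((A ∩ (F N : Set G)).ncard : ℝ) / (F N).card)
    ?_ ?_ ?_ ?_
  · intro N A
    constructor
    · positivity
    · rw [div_le_one (hcardpos N)]
      have := Set.ncard_le_ncard (Set.inter_subset_right (s := A) (t := (F N : Set G)))
        (F N).finite_toSet
      rw [Set.ncard_coe_finset] at this
      exact_mod_cast this
  · intro N
    rw [Set.univ_inter, Set.ncard_coe_finset]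
    exact div_self (ne_of_gt (hcardpos N))
  · intro N A B hAB
    rw [Set.union_inter_distrib_right, Set.ncard_union_eq
      (hAB.mono Set.inter_subset_left Set.inter_subset_left) (hfin A N) (hfin B N),
      Nat.cast_add, add_div]
  · intro g A
    have key : ∀ N, |((((g * ·) '' A ∩ (F N : Set G)).ncard : ℝ) / (F N).card)
        - ((A ∩ (F N : Set G)).ncard : ℝ) / (F N).card|
        ≤ ((((g⁻¹ * ·) '' (F N : Set G)) \ (F N : Set G)).ncard : ℝ) / (F N).card
          + ((((g * ·) '' (F N : Set G)) \ (F N : Set G)).ncard : ℝ) / (F N).card := by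
      intro N
      set S : Set G := (g⁻¹ * ·) '' (F N : Set G) with hS
      have hSfin : S.Finite := ((F N).finite_toSet).image _
      have hinj : Function.Injective (g * ·) := mul_right_injective g
      have hc1 : ((g * ·) '' A ∩ (F N : Set G)).ncard = (A ∩ S).ncard := by
        have himg : (g * ·) '' A ∩ (F N : Set G) = (g * ·) '' (A ∩ S) := by
          ext x
          simp only [Set.mem_inter_iff, mem_mulimg, hS, inv_inv, mul_inv_cancel_left]
        rw [himg, Set.ncard_image_of_injective _ hinj]
      have hFS : ((F N : Set G) \ S).ncard
          = (((g * ·) '' (F N : Set G)) \ (F N : Set G)).ncard := by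
        have himg2 : (g * ·) '' ((F N : Set G) \ S)
            = ((g * ·) '' (F N : Set G)) \ (F N : Set G) := by
          rw [Set.image_diff hinj, hS, ← Set.image_comp]
          have hid : ((g * ·) ∘ (g⁻¹ * ·)) = id := by
            funext x; simp only [Function.comp, id]; group
          rw [hid, Set.image_id]
        rw [← himg2, Set.ncard_image_of_injective _ hinj]
      have e1 : (A ∩ S).ncard ≤ (A ∩ (F N : Set G)).ncard + (S \ (F N : Set G)).ncard := by
        refine le_trans (Set.ncard_le_ncard ?_ ((hfin A N).union hSfin.diff))
          (Set.ncard_union_le _ _)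
        rintro x ⟨hxA, hxS⟩
        by_cases hxF : x ∈ (F N : Set G)
        · exact Or.inl ⟨hxA, hxF⟩
        · exact Or.inr ⟨hxS, hxF⟩
      have e2 : (A ∩ (F N : Set G)).ncard ≤ (A ∩ S).ncard + ((F N : Set G) \ S).ncard := by
        refine le_trans (Set.ncard_le_ncard ?_
          ((hSfin.inter_of_right A).union ((F N).finite_toSet).diff))
          (Set.ncard_union_le _ _)
        rintro x ⟨hxA, hxF⟩
        by_cases hxS : x ∈ S
        · exact Or.inl ⟨hxA, hxS⟩
        · exact Or.inr ⟨hxF, hxS⟩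
      rw [hc1, div_sub_div_same, ← add_div, abs_div,
        abs_of_nonneg (le_of_lt (hcardpos N)),
        div_le_div_iff_of_pos_right (hcardpos N), abs_sub_le_iff]
      rw [hFS] at e2
      have e1' : ((A ∩ S).ncard : ℝ)
          ≤ (A ∩ (F N : Set G)).ncard + (S \ (F N : Set G)).ncard := by exact_mod_cast e1
      have e2' : ((A ∩ (F N : Set G)).ncard : ℝ) ≤ (A ∩ S).ncard
          + (((g * ·) '' (F N : Set G)) \ (F N : Set G)).ncard := by exact_mod_cast e2
      have hpos1 : (0:ℝ) ≤ ((S \ (F N : Set G)).ncard : ℝ) := by positivity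
      have hpos2 : (0:ℝ) ≤ ((((g * ·) '' (F N : Set G)) \ (F N : Set G)).ncard : ℝ) := by
        positivity
      constructor <;> linarith
    have h0 : Tendsto (fun N =>
        ((((g⁻¹ * ·) '' (F N : Set G)) \ (F N : Set G)).ncard : ℝ) / (F N).card
        + ((((g * ·) '' (F N : Set G)) \ (F N : Set G)).ncard : ℝ) / (F N).card)
        atTop (nhds 0) := by
      simpa using (hF g⁻¹).add (hF g)
    exact (squeeze_zero_norm key h0).mono_left hu
end Folner

/-- Amenability passes to quotients (surjective homomorphic images). -/
lemma isAmenable_of_surjective {G K : Type*} [Group G] [Group K] (f : G →* K)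
    (hf : Function.Surjective f) (h : IsAmenable G) : IsAmenable K := by
  obtain ⟨m, hpos, huniv, hadd, hinv⟩ := h
  refine ⟨fun A => m (f ⁻¹' A), fun A => hpos _, by simpa using huniv, ?_, ?_⟩
  · intro A B hAB
    dsimp only
    rw [Set.preimage_union]
    exact hadd _ _ (Set.disjoint_left.2 fun x hx hx' =>
      Set.disjoint_left.1 hAB hx hx')
  · intro k A
    obtain ⟨g, rfl⟩ := hf k
    dsimp only
    have : f ⁻¹' ((f g * ·) '' A) = (g * ·) '' (f ⁻¹' A) := by
      ext x
      simp only [Set.mem_preimage, mem_mulimg, map_mul, map_inv]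
    rw [this, hinv]

lemma isAmenable_mult_pi_int (n : ℕ) : IsAmenable (Multiplicative (Fin n → ℤ)) := by
  classical
  set e : (Fin n → ℤ) ≃ Multiplicative (Fin n → ℤ) := Multiplicative.ofAdd with he
  set B : ℕ → Finset (Fin n → ℤ) :=
    fun N => Fintype.piFinset fun _ => Finset.Ico (0:ℤ) (N+1) with hB
  set F : ℕ → Finset (Multiplicative (Fin n → ℤ)) :=
    fun N => (B N).map e.toEmbedding with hF
  have hcardB : ∀ N, (B N).card = (N+1)^n := by
    intro N
    have h1 : ((N:ℤ)+1-0).toNat = N+1 := by omega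
    simp [hB, Fintype.card_piFinset, Int.card_Ico, h1]
  have hcardF : ∀ N, (F N).card = (N+1)^n := by
    intro N; rw [hF]; simp [Finset.card_map, hcardB N]
  apply isAmenable_of_folner F
  · intro N
    refine ⟨e (fun _ => 0), Finset.mem_map.2 ⟨fun _ => 0, ?_, rfl⟩⟩
    simp [hB, Fintype.mem_piFinset]
  · intro g
    set v : Fin n → ℤ := Multiplicative.toAdd g with hv
    set B' : ℕ → Finset (Fin n → ℤ) :=
      fun N => Fintype.piFinset fun i => Finset.Ico (v i) ((N:ℤ)+1+v i) with hB'
    have hmem' : ∀ (N : ℕ) (x : Fin n → ℤ), x ∈ B' N ↔ x - v ∈ B N := by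
      intro N x
      simp only [hB', hB, Fintype.mem_piFinset, Finset.mem_Ico, Pi.sub_apply]
      constructor <;> intro h i <;> have := h i <;> omega
    have hsymm : ∀ x : Multiplicative (Fin n → ℤ), e.symm (g⁻¹ * x) = e.symm x - v := by
      intro x
      funext i
      simp only [he, hv, Multiplicative.ofAdd_symm_eq, toAdd_mul, toAdd_inv,
        Pi.add_apply, Pi.neg_apply, Pi.sub_apply]
      ring
    have hD : ∀ N, ((g * ·) '' (F N : Set _)) \ (F N : Set _)
        = (((B' N \ B N).map e.toEmbedding : Finset _) : Set _) := by
      intro N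
      ext x
      simp only [Set.mem_diff, mem_mulimg, Finset.mem_coe, hF, Finset.mem_map_equiv,
        Finset.mem_sdiff, hsymm, ← hmem']
    have hcard' : ∀ N, (B' N).card = (N+1)^n := by
      intro N
      have h1 : ∀ i : Fin n, ((N:ℤ)+1+v i - v i).toNat = N+1 := by intro i; omega
      simp [hB', Fintype.card_piFinset, Int.card_Ico, h1]
    have hinter : ∀ N, (B' N ∩ B N).card
        = ∏ i : Fin n, (min ((N:ℤ)+1+v i) ((N:ℤ)+1) - max (v i) 0).toNat := by
      intro N
      have : B' N ∩ B N = Fintype.piFinset fun i =>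
          Finset.Ico (max (v i) 0) (min ((N:ℤ)+1+v i) ((N:ℤ)+1)) := by
        ext x
        simp only [Finset.mem_inter, hB', hB, Fintype.mem_piFinset, Finset.mem_Ico,
          le_max_iff, max_le_iff, lt_min_iff, min_lt_iff]
        constructor <;> intro h <;> [skip; constructor] <;> intro i <;>
          first
          | (obtain ⟨h1, h2⟩ := h; have := h1 i; have := h2 i; omega)
          | (have := h i; omega)
      rw [this, Fintype.card_piFinset]
      exact Finset.prod_congr rfl fun i _ => by rw [Int.card_Ico]
    -- the measure of the difference
    have hkey : ∀ N, ((((g * ·) '' (F N : Set _)) \ (F N : Set _)).ncard : ℝ) / (F N).card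
        = 1 - ∏ i : Fin n,
            ((((min ((N:ℤ)+1+v i) ((N:ℤ)+1) - max (v i) 0).toNat : ℕ)) : ℝ) / ((N:ℝ)+1) := by
      intro N
      have hNpos : ((N:ℝ)+1) ≠ 0 := by positivity
      have hsub : (B' N \ B N).card + (B' N ∩ B N).card = (B' N).card :=
        Finset.card_sdiff_add_card_inter _ _
      rw [hD N, Set.ncard_coe_finset, Finset.card_map, hcardF N]
      have hc : ((B' N \ B N).card : ℝ) = ((N:ℝ)+1)^n - (B' N ∩ B N).card := by
        have := hsub
        rw [hcard' N] at this
        have : ((B' N \ B N).card : ℝ) + (B' N ∩ B N).card = ((N+1)^n : ℕ) := by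
          exact_mod_cast congrArg (Nat.cast : ℕ → ℝ) this
        push_cast at this ⊢
        linarith
      rw [hc, hinter N]
      rw [Finset.prod_div_distrib]
      push_cast
      rw [Finset.prod_const, Finset.card_univ, Fintype.card_fin]
      field_simp
    rw [show (fun N => ((((g * ·) '' (F N : Set _)) \ (F N : Set _)).ncard : ℝ) / (F N).card)
        = fun N : ℕ => 1 - ∏ i : Fin n,
            ((((min ((N:ℤ)+1+v i) ((N:ℤ)+1) - max (v i) 0).toNat : ℕ)) : ℝ) / ((N:ℝ)+1)
      from funext hkey]
    have hfac : ∀ i : Fin n, Filter.Tendsto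
        (fun N : ℕ => (((min ((N:ℤ)+1+v i) ((N:ℤ)+1) - max (v i) 0).toNat : ℕ) : ℝ) / ((N:ℝ)+1))
        atTop (nhds 1) := by
      intro i
      have h1 : Tendsto (fun N : ℕ => ((N:ℝ)+1)) atTop atTop :=
        tendsto_atTop_add_const_right _ 1 tendsto_natCast_atTop_atTop
      have h2 : Tendsto (fun N : ℕ => (((v i).natAbs : ℝ))/((N:ℝ)+1)) atTop (nhds 0) :=
        Tendsto.div_atTop tendsto_const_nhds h1
      have hmain : Tendsto (fun N : ℕ => 1 - (((v i).natAbs : ℝ))/((N:ℝ)+1)) atTop (nhds 1) := by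
        simpa using (tendsto_const_nhds : Tendsto (fun _ : ℕ => (1:ℝ)) atTop (nhds 1)).sub h2
      refine Filter.Tendsto.congr' ?_ hmain
      filter_upwards [Filter.eventually_ge_atTop ((v i).natAbs)] with N hN
      have htn : (min ((N:ℤ)+1+v i) ((N:ℤ)+1) - max (v i) 0).toNat = N + 1 - (v i).natAbs := by
        omega
      rw [htn]
      have hle : (v i).natAbs ≤ N + 1 := by omega
      rw [Nat.cast_sub hle]
      push_cast
      have hNpos : ((N:ℝ)+1) ≠ 0 := by positivity
      field_simp
    have hprod : Tendsto (fun N : ℕ => ∏ i : Fin n,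
        (((min ((N:ℤ)+1+v i) ((N:ℤ)+1) - max (v i) 0).toNat : ℕ) : ℝ) / ((N:ℝ)+1))
        atTop (nhds 1) := by
      have := tendsto_finset_prod (f := fun (i : Fin n) (N : ℕ) =>
        (((min ((N:ℤ)+1+v i) ((N:ℤ)+1) - max (v i) 0).toNat : ℕ) : ℝ) / ((N:ℝ)+1))
        (x := atTop) (a := fun _ => (1:ℝ)) Finset.univ (fun i _ => hfac i)
      simpa using this
    simpa using (tendsto_const_nhds : Tendsto (fun _ : ℕ => (1:ℝ)) atTop (nhds 1)).sub hprod

/-- A group generated by finitely many pairwise-commuting... i.e. a f.g. commutative group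
(commutativity supplied as a hypothesis) is amenable. -/
lemma isAmenable_of_comm_gen {Γ : Type*} [Group Γ] (hc : ∀ x y : Γ, x * y = y * x)
    (n : ℕ) (z : Fin n → Γ) (hz : Subgroup.closure (Set.range z) = ⊤) : IsAmenable Γ := by
  letI : CommGroup Γ := { (inferInstance : Group Γ) with mul_comm := hc }
  let φ : Multiplicative (Fin n → ℤ) →* Γ :=
  { toFun := fun a => ∏ i, z i ^ (Multiplicative.toAdd a i)
    map_one' := by simp
    map_mul' := by
      intro a b
      simp only [toAdd_mul, Pi.add_apply]
      rw [← Finset.prod_mul_distrib]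
      exact Finset.prod_congr rfl fun i _ => zpow_add _ _ _ }
  have hsurj : Function.Surjective φ := by
    have hle : Subgroup.closure (Set.range z) ≤ φ.range := by
      rw [Subgroup.closure_le]
      rintro x ⟨i, rfl⟩
      refine ⟨Multiplicative.ofAdd (Pi.single i (1:ℤ)), ?_⟩
      have hφ : φ (Multiplicative.ofAdd (Pi.single i (1:ℤ)))
          = ∏ j, z j ^ ((Pi.single i (1:ℤ) : Fin n → ℤ) j) := rfl
      rw [hφ, Finset.prod_eq_single i (fun j _ hj => by rw [Pi.single_eq_of_ne hj, zpow_zero])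
        (fun h => absurd (Finset.mem_univ i) h), Pi.single_eq_same, zpow_one]
    intro y
    exact hle (hz ▸ Subgroup.mem_top y)
  exact isAmenable_of_surjective φ hsurj (isAmenable_mult_pi_int n)

lemma isAmenable_of_comm_fg {Γ : Type*} [Group Γ] (hc : ∀ x y : Γ, x * y = y * x)
    (hFG : Group.FG Γ) : IsAmenable Γ := by
  obtain ⟨S, hS⟩ := Group.fg_def.mp hFG
  refine isAmenable_of_comm_gen hc S.card (fun i => (S.equivFin.symm i : Γ)) ?_
  have : Set.range (fun i => (S.equivFin.symm i : Γ)) = (S : Set Γ) := by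
    ext y
    constructor
    · rintro ⟨i, rfl⟩; exact (S.equivFin.symm i).2
    · intro hy; exact ⟨S.equivFin ⟨y, hy⟩, by simp⟩
  rw [this, hS]

/-- If the center has finite index and is amenable, the group is amenable. -/
lemma isAmenable_of_center_finiteIndex {K : Type*} [Group K]
    (hfi : (Subgroup.center K).FiniteIndex) (hAm : IsAmenable ↥(Subgroup.center K)) :
    IsAmenable K := by
  classical
  obtain ⟨m, hpos, huniv, hadd, hinv⟩ := hAm
  haveI : (Subgroup.center K).FiniteIndex := hfi
  haveI : Finite (K ⧸ Subgroup.center K) :=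
    Subgroup.finite_quotient_of_finiteIndex
  letI : Fintype (K ⧸ Subgroup.center K) := Fintype.ofFinite _
  have hcomm : ∀ a b : ↥(Subgroup.center K), a * b = b * a := fun a b =>
    Subtype.ext (Subgroup.mem_center_iff.mp a.2 (b : K)).symm
  have hcardpos : (0:ℝ) < Fintype.card (K ⧸ Subgroup.center K) := by
    have : 0 < Fintype.card (K ⧸ Subgroup.center K) := Fintype.card_pos
    exact_mod_cast this
  set T : Set K → (K ⧸ Subgroup.center K) → Set ↥(Subgroup.center K) :=
    fun A q => {z : ↥(Subgroup.center K) | (z : K) * q.out ∈ A} with hT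
  refine ⟨fun A => (∑ q : K ⧸ Subgroup.center K, m (T A q))
    / (Fintype.card (K ⧸ Subgroup.center K)), ?_, ?_, ?_, ?_⟩
  · intro A
    have : 0 ≤ ∑ q : K ⧸ Subgroup.center K, m (T A q) := Finset.sum_nonneg fun q _ => hpos _
    positivity
  · have huu : ∀ q : K ⧸ Subgroup.center K, T Set.univ q = Set.univ := fun q => by
      ext z; simp [hT]
    simp only [huu, huniv, Finset.sum_const, Finset.card_univ, nsmul_eq_mul, mul_one]
    exact div_self (ne_of_gt hcardpos)
  · intro A B hAB
    have hsplit : ∀ q : K ⧸ Subgroup.center K, T (A ∪ B) q = T A q ∪ T B q := fun q => by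
      ext z; simp [hT, Set.mem_union]
    have hdisj : ∀ q : K ⧸ Subgroup.center K, Disjoint (T A q) (T B q) := fun q =>
      Set.disjoint_left.2 fun z hz hz' => Set.disjoint_left.1 hAB hz hz'
    simp only [hsplit]
    rw [show (∑ q : K ⧸ Subgroup.center K, m (T A q ∪ T B q))
        = ∑ q : K ⧸ Subgroup.center K, (m (T A q) + m (T B q)) from
      Finset.sum_congr rfl fun q _ => hadd _ _ (hdisj q), Finset.sum_add_distrib, add_div]
  · intro g A
    have hterm : ∀ q : K ⧸ Subgroup.center K, m (T ((g * ·) '' A) q)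
        = m (T A ((QuotientGroup.mk g⁻¹ : K ⧸ Subgroup.center K) * q)) := by
      intro q
      set q' : K ⧸ Subgroup.center K := (QuotientGroup.mk g⁻¹ : K ⧸ Subgroup.center K) * q
        with hq'
      have hq'2 : q' = QuotientGroup.mk (g⁻¹ * q.out) := by
        rw [hq', QuotientGroup.mk_mul, QuotientGroup.out_eq']
      have hw : q'.out⁻¹ * (g⁻¹ * q.out) ∈ Subgroup.center K := by
        rw [← QuotientGroup.eq, QuotientGroup.out_eq' q']
        exact hq'2
      set w : ↥(Subgroup.center K) := ⟨q'.out⁻¹ * (g⁻¹ * q.out), hw⟩ with hwdef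
      have hgq : g⁻¹ * q.out = q'.out * (w : K) := by
        rw [hwdef]; simp
      have hc1 : ∀ z : ↥(Subgroup.center K),
          g⁻¹ * ((z : K) * q.out) = ((z * w : ↥(Subgroup.center K)) : K) * q'.out := by
        intro z
        have h1 := Subgroup.mem_center_iff.mp z.2 g⁻¹
        have h2 := Subgroup.mem_center_iff.mp w.2 q'.out
        push_cast
        rw [← mul_assoc, h1, mul_assoc, hgq, h2, ← mul_assoc]
      have hset : T ((g * ·) '' A) q = (w⁻¹ * ·) '' (T A q') := by
        ext z
        constructor
        · intro hz
          have hz' : g⁻¹ * ((z : K) * q.out) ∈ A := mem_mulimg.mp hz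
          rw [hc1 z] at hz'
          refine mem_mulimg.mpr ?_
          have he : (w⁻¹)⁻¹ * z = z * w := by rw [inv_inv, hcomm]
          rw [he]
          exact hz'
        · intro hz
          have hz' := mem_mulimg.mp hz
          have he : (w⁻¹)⁻¹ * z = z * w := by rw [inv_inv, hcomm]
          rw [he] at hz'
          show (z : K) * q.out ∈ (g * ·) '' A
          exact mem_mulimg.mpr (by rw [hc1 z]; exact hz')
      rw [hset, hinv]
    simp only [hterm]
    rw [Fintype.sum_equiv (Equiv.mulLeft (QuotientGroup.mk g⁻¹ : K ⧸ Subgroup.center K))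
      (fun x => m (T A ((QuotientGroup.mk g⁻¹ : K ⧸ Subgroup.center K) * x)))
      (fun x => m (T A x)) (fun x => rfl)]

/-- Transfer finiteness of conjugacy classes along an injective homomorphism. -/
lemma conjclass_finite_of_injective {Γ Δ : Type*} [Group Γ] [Group Δ] (f : Γ →* Δ)
    (hf : Function.Injective f) (g : Γ) (hfin : {y : Δ | IsConj (f g) y}.Finite) :
    {x : Γ | IsConj g x}.Finite := by
  refine Set.Finite.subset (hfin.preimage (hf.injOn)) ?_
  intro x hx
  exact f.map_isConj hx

/-- The centralizer of an element with finite conjugacy class has finite index. -/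
lemma finiteIndex_centralizer {Γ : Type*} [Group Γ] (g : Γ)
    (hfin : {x : Γ | IsConj g x}.Finite) :
    (Subgroup.centralizer (Subgroup.zpowers g : Set Γ)).FiniteIndex := by
  have h1 : Subgroup.centralizer (Subgroup.zpowers g : Set Γ)
      = Subgroup.centralizer {g} := by
    apply le_antisymm
    · apply Subgroup.centralizer_le
      intro y hy
      rw [Set.mem_singleton_iff] at hy
      rw [hy]
      exact Subgroup.mem_zpowers g
    · intro x hx
      rw [Subgroup.mem_centralizer_iff] at hx ⊢
      intro y hy
      rw [SetLike.mem_coe, Subgroup.mem_zpowers_iff] at hy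
      obtain ⟨n, rfl⟩ := hy
      have hc : Commute g x := hx g (Set.mem_singleton g)
      exact (hc.zpow_left n).eq
  rw [h1]
  constructor
  rw [Subgroup.centralizer_eq_comap_stabilizer]
  erw [Subgroup.index_comap,
    MonoidHom.range_eq_top_of_surjective _ (ConjAct.toConjAct.surjective),
    Subgroup.relIndex_top_right, MulAction.index_stabilizer]
  have horb : MulAction.orbit (ConjAct Γ) g = {x : Γ | IsConj g x} := by
    ext x
    rw [ConjAct.mem_orbit_conjAct]
    exact isConj_comm
  rw [horb]
  have hne : {x : Γ | IsConj g x}.Nonempty := ⟨g, IsConj.refl g⟩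
  exact ((Set.ncard_pos hfin).mpr hne).ne'

lemma center_finiteIndex_of_conjfinite {Γ : Type*} [Group Γ]
    (hconj : ∀ g : Γ, {x : Γ | IsConj g x}.Finite) (S : Finset Γ)
    (hS : Subgroup.closure (S : Set Γ) = ⊤) : (Subgroup.center Γ).FiniteIndex := by
  rw [Subgroup.center_eq_infi' (s := (S : Set Γ)) hS]
  exact Subgroup.finiteIndex_iInf fun g => by
    have h := finiteIndex_centralizer _ (hconj (g : Γ))
    rwa [Subgroup.zpowers_eq_closure, Subgroup.centralizer_closure] at h

/-- A finitely generated group with finite conjugacy classes is amenable. -/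
lemma isAmenable_of_fc_fg {Γ : Type*} [Group Γ] [hFG : Group.FG Γ]
    (hconj : ∀ g : Γ, {x : Γ | IsConj g x}.Finite) : IsAmenable Γ := by
  obtain ⟨S, hS⟩ := Group.fg_def.mp hFG
  have hfi := center_finiteIndex_of_conjfinite hconj S hS
  haveI := hfi
  haveI hfg : Group.FG ↥(Subgroup.center Γ) := Subgroup.fg_of_index_ne_zero _
  refine isAmenable_of_center_finiteIndex hfi (isAmenable_of_comm_fg ?_ hfg)
  intro a b
  exact Subtype.ext (Subgroup.mem_center_iff.mp a.2 (b : Γ)).symm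

/-- In a measure coming from `IsAmenable`, every set has measure at most 1. -/
lemma measure_le_one {G : Type*} [Group G] (m : Set G → ℝ)
    (hpos : ∀ A : Set G, 0 ≤ m A) (huniv : m Set.univ = 1)
    (hadd : ∀ A B : Set G, Disjoint A B → m (A ∪ B) = m A + m B) (A : Set G) :
    m A ≤ 1 := by
  have hd : Disjoint A (Set.univ \ A) := Set.disjoint_sdiff_right
  have h1 := hadd A (Set.univ \ A) hd
  rw [Set.union_diff_cancel (Set.subset_univ A)] at h1
  have h2 := hpos (Set.univ \ A)
  linarith

/-- The FC-center of any group is an amenable group. -/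
theorem stmt4 {G : Type*} [Group G] (H : Subgroup G)
    (hH : (H : Set G) = {h : G | {g : G | IsConj h g}.Finite}) :
    IsAmenable H := by
  have hHconj : ∀ s : ↥H, {x : ↥H | IsConj s x}.Finite := by
    intro s
    refine conjclass_finite_of_injective H.subtype H.subtype_injective s ?_
    have h2 : (↑s : G) ∈ (H : Set G) := s.2
    rw [hH] at h2
    exact h2
  have hfg : ∀ S : Finset ↥H, IsAmenable ↥(Subgroup.closure (S : Set ↥H)) := by
    intro S
    haveI : Group.FG ↥(Subgroup.closure (S : Set ↥H)) := Group.closure_finset_fg S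
    exact isAmenable_of_fc_fg fun g => conjclass_finite_of_injective
      (Subgroup.closure (S : Set ↥H)).subtype (Subgroup.subtype_injective _) g (hHconj _)
  choose m hm using hfg
  obtain ⟨u, hu⟩ : ∃ u : Ultrafilter (Finset ↥H), (u : Filter (Finset ↥H)) ≤ atTop :=
    ⟨Ultrafilter.of atTop, Ultrafilter.of_le _⟩
  set μ : Finset ↥H → Set ↥H → ℝ :=
    fun S A => m S {k : ↥(Subgroup.closure (S : Set ↥H)) | (k : ↥H) ∈ A} with hμ
  refine isAmenable_limit u μ ?_ ?_ ?_ ?_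
  · intro S A
    obtain ⟨hpos, huniv, hadd, hinv⟩ := hm S
    exact ⟨hpos _, measure_le_one (m S) hpos huniv hadd _⟩
  · intro S
    obtain ⟨hpos, huniv, hadd, hinv⟩ := hm S
    have : {k : ↥(Subgroup.closure (S : Set ↥H)) | (k : ↥H) ∈ Set.univ} = Set.univ := by
      ext k; simp
    rw [hμ]
    simp only [this]
    exact huniv
  · intro S A B hAB
    obtain ⟨hpos, huniv, hadd, hinv⟩ := hm S
    have hsplit : {k : ↥(Subgroup.closure (S : Set ↥H)) | (k : ↥H) ∈ A ∪ B}
        = {k : ↥(Subgroup.closure (S : Set ↥H)) | (k : ↥H) ∈ A}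
          ∪ {k : ↥(Subgroup.closure (S : Set ↥H)) | (k : ↥H) ∈ B} := by
      ext k; simp [Set.mem_union]
    have hdisj : Disjoint {k : ↥(Subgroup.closure (S : Set ↥H)) | (k : ↥H) ∈ A}
        {k : ↥(Subgroup.closure (S : Set ↥H)) | (k : ↥H) ∈ B} :=
      Set.disjoint_left.2 fun k hk hk' => Set.disjoint_left.1 hAB hk hk'
    rw [hμ]
    simp only [hsplit]
    exact hadd _ _ hdisj
  · intro g A
    have hev : ∀ᶠ S in (atTop : Filter (Finset ↥H)),
        μ S ((g * ·) '' A) - μ S A = 0 := by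
      filter_upwards [Filter.eventually_ge_atTop ({g} : Finset ↥H)] with S hS
      have hgS : g ∈ Subgroup.closure (S : Set ↥H) :=
        Subgroup.subset_closure (hS (Finset.mem_singleton_self g))
      set g' : ↥(Subgroup.closure (S : Set ↥H)) := ⟨g, hgS⟩ with hg'
      obtain ⟨hpos, huniv, hadd, hinv⟩ := hm S
      have hset : {k : ↥(Subgroup.closure (S : Set ↥H)) | (k : ↥H) ∈ (g * ·) '' A}
          = (g' * ·) '' {k : ↥(Subgroup.closure (S : Set ↥H)) | (k : ↥H) ∈ A} := by
        ext k
        rw [Set.mem_setOf_eq, mem_mulimg, mem_mulimg]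
        have : (↑(g'⁻¹ * k) : ↥H) = g⁻¹ * (k : ↥H) := by
          push_cast [hg']
          rfl
        rw [Set.mem_setOf_eq, ← this]
      rw [hμ]
      simp only [hset]
      rw [hinv]
      ring
    have : (fun S => μ S ((g * ·) '' A) - μ S A) =ᶠ[(u : Filter (Finset ↥H))]
        (fun _ => (0:ℝ)) := (hev.filter_mono hu)
    exact Filter.Tendsto.congr' this.symm tendsto_const_nhds
end

section
/- Let τ : S¹ → S¹ be rotation by irrational angle α. If 𝔠 : ℤ → Closeds(S¹) satisfies Cif1 (𝔠(-n) = τⁿ 𝔠(n)) and Cif2 (𝔠(m+n) ⊆ τ⁻ᵐ 𝔠(n) ∪ 𝔠(m) for m, n in the support) and 𝔠(n) has empty interior for every n in the support of 𝔠, then the support {n ∈ ℤ : 𝔠(n) ≠ S¹} is a subgroup of ℤ. -/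
open Set

/-- If `c` is a closed ideal set function for the irrational rotation by `α` on `ℝ/2πℤ`
whose values on its support have empty interior, then the support
`{n : ℤ | c n ≠ univ}` is a subgroup of `ℤ`. -/
theorem stmt6 (α : ℝ) (hα : Irrational (α / (2 * Real.pi)))
    (c : ℤ → Set (AddCircle (2 * Real.pi)))
    (hclosed : ∀ n : ℤ, IsClosed (c n))
    (h0 : c 0 = ∅)
    (hCif1 : ∀ n : ℤ,
      c (-n) = (fun x => x + n • (α : AddCircle (2 * Real.pi))) '' c n)
    (hCif2 : ∀ m n : ℤ, c m ≠ univ → c n ≠ univ →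
      c (m + n) ⊆ ((fun x => x + (-m) • (α : AddCircle (2 * Real.pi))) '' c n) ∪ c m)
    (hND : ∀ n : ℤ, c n ≠ univ → interior (c n) = ∅) :
    ∃ H : AddSubgroup ℤ, (H : Set ℤ) = {n : ℤ | c n ≠ univ} := by
  have hneg : ∀ n : ℤ, c n ≠ univ → c (-n) ≠ univ := by
    intro n hn hcontra
    apply hn
    let e := Homeomorph.addRight (n • (α : AddCircle (2 * Real.pi)))
    have himg : (fun x => x + n • (α : AddCircle (2 * Real.pi))) '' c n = e '' c n := rfl
    rw [hCif1 n, himg] at hcontra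
    have : c n = e ⁻¹' (e '' c n) := (e.injective.preimage_image (c n)).symm
    rw [this, hcontra]
    simp
  refine ⟨{
    carrier := {n : ℤ | c n ≠ univ}
    zero_mem' := by
      simp only [mem_setOf_eq, h0]
      intro h
      exact absurd (h ▸ (mem_univ (0 : AddCircle (2 * Real.pi)))) (notMem_empty _)
    add_mem' := by
      intro m n hm hn
      simp only [mem_setOf_eq] at hm hn ⊢
      intro hcontra
      have hsub := hCif2 m n hm hn
      rw [hcontra] at hsub
      set e := Homeomorph.addRight ((-m) • (α : AddCircle (2 * Real.pi))) with he
      have himg : (fun x => x + (-m) • (α : AddCircle (2 * Real.pi))) '' c n = e '' c n := rfl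
      rw [himg] at hsub
      have hAclosed : IsClosed (e '' c n) := e.isClosedMap _ (hclosed n)
      have hAint : interior (e '' c n) = ∅ := by
        rw [← Homeomorph.image_interior, hND n hn, image_empty]
      have hunion : (e '' c n) ∪ c m = univ := univ_subset_iff.mp hsub
      have hi : interior ((e '' c n) ∪ c m) = interior (e '' c n) :=
        interior_union_isClosed_of_interior_empty hAclosed (hND m hm)
      rw [hunion, hAint, interior_univ] at hi
      exact absurd (hi ▸ (mem_univ (0 : AddCircle (2 * Real.pi)))) (notMem_empty _)
    neg_mem' := by
      intro n hn
      exact hneg n hn }, rfl⟩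
end

section
/- Fix q ∈ ℕ, q ≥ 1, a closed set P ⊆ S¹, and τ the irrational rotation of S¹. Define 𝔟(m) = τ^{q(1-n)}P ∪ ⋯ ∪ τ^{-q}P ∪ P for m = nq with n > 0, 𝔟(0) = ∅, 𝔟(m) = τ^q P ∪ ⋯ ∪ τ^{nq}P for m = -nq with n > 0, and 𝔟(m) = S¹ if q does not divide m. Then 𝔟 satisfies Cif1: 𝔟(-m) = τ^m 𝔟(m) for all m ∈ ℤ, and Cif2: 𝔟(m+n) ⊆ τ^{-m}𝔟(n) ∪ 𝔟(m) for all m, n in the support of 𝔟. -/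
open Set

/-- The basic ideal set function `𝔟_{q,P}` satisfies `Cif1` and `Cif2`. -/
theorem stmt9 (α : ℝ) (hα : Irrational (α / (2 * Real.pi)))
    (q : ℕ) (hq : 1 ≤ q)
    (P : Set (AddCircle (2 * Real.pi))) (hP : IsClosed P)
    (b : ℤ → Set (AddCircle (2 * Real.pi)))
    (hb0 : b 0 = ∅)
    (hbpos : ∀ n : ℕ, 0 < n →
      b ((n : ℤ) * q) = ⋃ k ∈ Finset.range n,
        (fun x => x + (-((k : ℤ) * q)) • (α : AddCircle (2 * Real.pi))) '' P)
    (hbneg : ∀ n : ℕ, 0 < n →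
      b (-((n : ℤ) * q)) = ⋃ k ∈ Finset.Icc 1 n,
        (fun x => x + ((k : ℤ) * q) • (α : AddCircle (2 * Real.pi))) '' P)
    (hbnd : ∀ m : ℤ, ¬ ((q : ℤ) ∣ m) → b m = univ) :
    (∀ m : ℤ, b (-m) = (fun x => x + m • (α : AddCircle (2 * Real.pi))) '' b m) ∧
    (∀ m n : ℤ, b m ≠ univ → b n ≠ univ →
      b (m + n) ⊆ ((fun x => x + (-m) • (α : AddCircle (2 * Real.pi))) '' b n) ∪ b m) := by
  set c : AddCircle (2 * Real.pi) := (α : AddCircle (2 * Real.pi)) with hc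
  have comb : ∀ (y : AddCircle (2 * Real.pi)) (s t : ℤ), y + s • c + t • c = y + (s + t) • c := by
    intro y s t
    rw [add_assoc, ← add_zsmul]
  have mem_img : ∀ (t : ℤ) (s : Set (AddCircle (2 * Real.pi))) (y : AddCircle (2 * Real.pi)),
      y ∈ (fun x => x + t • c) '' s ↔ y + (-t) • c ∈ s := by
    intro t s y
    constructor
    · rintro ⟨x, hx, rfl⟩
      have : x + t • c + (-t) • c = x := by rw [comb]; simp
      rwa [this]
    · intro h
      refine ⟨y + (-t) • c, h, ?_⟩
      show y + (-t) • c + t • c = y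
      rw [comb]; simp
  have key : ∀ a : ℤ, b (a * q) =
      ⋃ k ∈ {k : ℤ | (0 ≤ k ∧ k < a) ∨ (a ≤ k ∧ k < 0)},
        (fun x => x + (-(k * q)) • c) '' P := by
    intro a
    rcases lt_trichotomy a 0 with h | h | h
    · obtain ⟨n, hn, rfl⟩ : ∃ n : ℕ, 0 < n ∧ a = -(n : ℤ) :=
        ⟨a.natAbs, by omega, by omega⟩
      rw [show (-(n : ℤ)) * q = -((n : ℤ) * q) by ring, hbneg n hn]
      ext y
      simp only [mem_iUnion, Finset.mem_Icc, mem_setOf_eq, exists_prop]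
      constructor
      · rintro ⟨k, ⟨hk1, hk2⟩, hy⟩
        refine ⟨-(k : ℤ), Or.inr ⟨by omega, by omega⟩, ?_⟩
        rw [show (-(-(k : ℤ) * q) : ℤ) = (k : ℤ) * q by ring]
        exact hy
      · rintro ⟨k, hk, hy⟩
        rcases hk with ⟨h1, h2⟩ | ⟨h1, h2⟩
        · omega
        refine ⟨(-k).toNat, ⟨by omega, by omega⟩, ?_⟩
        rw [show (((-k).toNat : ℤ) * q : ℤ) = -(k * q) by
          have hh : ((-k).toNat : ℤ) = -k := by omega
          rw [hh]; ring]
        exact hy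
    · subst h
      rw [zero_mul, hb0]
      ext y
      simp only [mem_iUnion, mem_setOf_eq, mem_empty_iff_false, false_iff, exists_prop,
        not_exists]
      rintro k ⟨hk, -⟩
      rcases hk with ⟨h1, h2⟩ | ⟨h1, h2⟩ <;> omega
    · obtain ⟨n, hn, rfl⟩ : ∃ n : ℕ, 0 < n ∧ a = (n : ℤ) :=
        ⟨a.toNat, by omega, by omega⟩
      rw [hbpos n hn]
      ext y
      simp only [mem_iUnion, Finset.mem_range, mem_setOf_eq, exists_prop]
      constructor
      · rintro ⟨k, hk, hy⟩
        exact ⟨(k : ℤ), Or.inl ⟨by omega, by omega⟩, hy⟩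
      · rintro ⟨k, hk, hy⟩
        rcases hk with ⟨h1, h2⟩ | ⟨h1, h2⟩
        · refine ⟨k.toNat, by omega, ?_⟩
          rw [show ((k.toNat : ℤ) * q : ℤ) = k * q by
            have hh : (k.toNat : ℤ) = k := by omega
            rw [hh]]
          exact hy
        · omega
  have U : ∀ (S : Set ℤ) (y : AddCircle (2 * Real.pi)),
      (y ∈ ⋃ k ∈ S, (fun x => x + (-(k * q)) • c) '' P) ↔ ∃ k ∈ S, y + (k * q) • c ∈ P := by
    intro S y
    simp only [mem_iUnion, exists_prop, mem_img, neg_neg]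
  constructor
  · -- Cif1
    intro m
    by_cases hd : (q : ℤ) ∣ m
    · obtain ⟨a, rfl⟩ := hd
      have e1 : ((q : ℤ) * a) = a * q := mul_comm _ _
      have e2 : (-((q : ℤ) * a)) = (-a) * q := by ring
      rw [e2, e1, key, key]
      ext y
      rw [mem_img, U, U]
      constructor
      · rintro ⟨k, hk, hy⟩
        refine ⟨k + a, ?_, ?_⟩
        · simp only [mem_setOf_eq] at hk ⊢
          omega
        · rw [comb, show (-(a * (q : ℤ)) + (k + a) * q) = k * q by ring]
          exact hy
      · rintro ⟨k, hk, hy⟩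
        refine ⟨k - a, ?_, ?_⟩
        · simp only [mem_setOf_eq] at hk ⊢
          omega
        · rw [comb, show (-(a * (q : ℤ)) + k * q) = (k - a) * q by ring] at hy
          exact hy
    · have hd' : ¬ ((q : ℤ) ∣ -m) := by
        intro h
        exact hd (by simpa using h.neg_right)
      rw [hbnd m hd, hbnd (-m) hd']
      ext y
      simp only [mem_univ, true_iff]
      rw [mem_img]
      trivial
  · -- Cif2
    intro m n hm hn
    have hdm : (q : ℤ) ∣ m := by
      by_contra h; exact hm (hbnd m h)
    have hdn : (q : ℤ) ∣ n := by
      by_contra h; exact hn (hbnd n h)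
    obtain ⟨a, rfl⟩ := hdm
    obtain ⟨e, rfl⟩ := hdn
    have e1 : ((q : ℤ) * a + (q : ℤ) * e) = (a + e) * q := by ring
    have e2 : ((q : ℤ) * a) = a * q := mul_comm _ _
    have e3 : ((q : ℤ) * e) = e * q := mul_comm _ _
    rw [e1, key]
    conv_rhs => rw [e2, e3, key, key]
    intro y hy
    rw [U] at hy
    obtain ⟨k, hk, hy⟩ := hy
    simp only [mem_setOf_eq] at hk
    by_cases hka : (0 ≤ k ∧ k < a) ∨ (a ≤ k ∧ k < 0)
    · right
      rw [U]
      exact ⟨k, hka, hy⟩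
    · left
      rw [mem_img, neg_neg, U]
      refine ⟨k - a, ?_, ?_⟩
      · simp only [mem_setOf_eq]
        omega
      · rw [comb, show (a * (q : ℤ) + (k - a) * q) = k * q by ring]
        exact hy
end

section
/- Let τ be rotation of S¹ by irrational α, p ∈ S¹, and let 𝔞 = 𝔟_{1,{p}} and 𝔟 = 𝔟_{1,{τp}} be the basic set functions with parameters (1,{p}) and (1,{τp}). Define (𝔞 ⊼ 𝔟)(n) = 𝔞(n) ∩ 𝔟(n). Then (𝔞 ⊼ 𝔟)(n) = ∅ for |n| ≤ 1, = {p, τ⁻¹p, …, τ^{-n+2}p} for n ≥ 2, and = {τ²p, τ³p, …, τⁿp} for n ≤ -2; in particular 𝔞 ⊼ 𝔟 fails condition Cif2 and is not a closed ideal set function. -/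
open Set

lemma inj_key (α : ℝ) (hα : Irrational (α / (2 * Real.pi))) {j k : ℤ}
    (h : j • ((α : AddCircle (2 * Real.pi))) = k • (α : AddCircle (2 * Real.pi))) : j = k := by
  by_contra hne
  rw [← AddCircle.coe_zsmul, ← AddCircle.coe_zsmul, QuotientAddGroup.eq_iff_sub_mem,
    AddSubgroup.mem_zmultiples_iff] at h
  obtain ⟨n, hn⟩ := h
  have hπ : (2 * Real.pi) ≠ 0 := by positivity
  apply hα
  refine ⟨(n : ℚ) / ((j : ℚ) - k), ?_⟩
  have hjk : (j : ℝ) - k ≠ 0 := by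
    simp only [sub_ne_zero]
    exact_mod_cast hne
  push_cast
  rw [div_eq_div_iff (by exact hjk) hπ]
  simp only [zsmul_eq_mul] at hn
  linarith [hn, mul_sub α (j:ℝ) (k:ℝ)]

/-- For the basic set functions `𝔞 = 𝔟_{1,{p}}` and `𝔟 = 𝔟_{1,{τp}}`, their pointwise
meet `(𝔞 ⊼ 𝔟)(n) = 𝔞(n) ∩ 𝔟(n)` is `∅` for `|n| ≤ 1`, equals
`{p, τ⁻¹p, …, τ^{-n+2}p}` for `n ≥ 2`, and `{τ²p, …, τ^{-n}p}` for `n ≤ -2`; in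
particular it fails condition `Cif2`, so it is not a closed ideal set function. -/
theorem stmt10 (α : ℝ) (hα : Irrational (α / (2 * Real.pi)))
    (p : AddCircle (2 * Real.pi))
    (fa fb : ℤ → Set (AddCircle (2 * Real.pi)))
    (ha0 : fa 0 = ∅)
    (hapos : ∀ m : ℤ, 0 < m → fa m = ⋃ k ∈ Finset.range m.toNat,
      {p + (-(k : ℤ)) • (α : AddCircle (2 * Real.pi))})
    (haneg : ∀ m : ℤ, m < 0 → fa m = ⋃ k ∈ Finset.Icc 1 (-m).toNat,
      {p + (k : ℤ) • (α : AddCircle (2 * Real.pi))})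
    (hb0 : fb 0 = ∅)
    (hbpos : ∀ m : ℤ, 0 < m → fb m = ⋃ k ∈ Finset.range m.toNat,
      {(p + (α : AddCircle (2 * Real.pi))) + (-(k : ℤ)) • (α : AddCircle (2 * Real.pi))})
    (hbneg : ∀ m : ℤ, m < 0 → fb m = ⋃ k ∈ Finset.Icc 1 (-m).toNat,
      {(p + (α : AddCircle (2 * Real.pi))) + (k : ℤ) • (α : AddCircle (2 * Real.pi))}) :
    (∀ n : ℤ, |n| ≤ 1 → fa n ∩ fb n = ∅) ∧
    (∀ n : ℤ, 2 ≤ n → fa n ∩ fb n = ⋃ k ∈ Finset.range (n.toNat - 1),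
      {p + (-(k : ℤ)) • (α : AddCircle (2 * Real.pi))}) ∧
    (∀ n : ℤ, n ≤ -2 → fa n ∩ fb n = ⋃ k ∈ Finset.Icc 2 (-n).toNat,
      {p + (k : ℤ) • (α : AddCircle (2 * Real.pi))}) ∧
    ¬ (∀ m n : ℤ, fa m ∩ fb m ≠ univ → fa n ∩ fb n ≠ univ →
        fa (m + n) ∩ fb (m + n) ⊆
          ((fun x => x + (-m) • (α : AddCircle (2 * Real.pi))) '' (fa n ∩ fb n))
            ∪ (fa m ∩ fb m)) := by
  set A : AddCircle (2 * Real.pi) := (α : AddCircle (2 * Real.pi)) with hA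
  have keyeq : ∀ (m l : ℤ), (p + m • A = p + l • A) ↔ m = l := by
    intro m l
    constructor
    · intro h
      exact inj_key α hα (add_left_cancel h)
    · rintro rfl; rfl
  have hnorm : ∀ c : ℤ, p + A + c • A = p + (1 + c) • A := by
    intro c
    rw [add_zsmul, one_zsmul, add_assoc]
  -- positive case
  have hpos : ∀ n : ℤ, 2 ≤ n → fa n ∩ fb n = ⋃ k ∈ Finset.range (n.toNat - 1),
      {p + (-(k : ℤ)) • A} := by
    intro n hn
    rw [hapos n (by omega), hbpos n (by omega)]
    ext x
    simp only [mem_inter_iff, mem_iUnion, Finset.mem_range, mem_singleton_iff, exists_prop]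
    constructor
    · rintro ⟨⟨k, hk, rfl⟩, ⟨k', hk', hx'⟩⟩
      rw [hnorm] at hx'
      have : (-(k:ℤ)) = 1 + -(k':ℤ) := (keyeq _ _).mp hx'
      refine ⟨k, by omega, rfl⟩
    · rintro ⟨k, hk, rfl⟩
      refine ⟨⟨k, by omega, rfl⟩, ⟨k + 1, by omega, ?_⟩⟩
      rw [hnorm]
      have : (1 + -((k+1:ℕ):ℤ)) = -(k:ℤ) := by push_cast; ring
      rw [this]
  -- negative case
  have hneg : ∀ n : ℤ, n ≤ -2 → fa n ∩ fb n = ⋃ k ∈ Finset.Icc 2 (-n).toNat,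
      {p + (k : ℤ) • A} := by
    intro n hn
    rw [haneg n (by omega), hbneg n (by omega)]
    ext x
    simp only [mem_inter_iff, mem_iUnion, Finset.mem_Icc, mem_singleton_iff, exists_prop]
    constructor
    · rintro ⟨⟨k, hk, rfl⟩, ⟨k', hk', hx'⟩⟩
      rw [hnorm] at hx'
      have : (k:ℤ) = 1 + k' := (keyeq _ _).mp hx'
      refine ⟨k, by omega, rfl⟩
    · rintro ⟨k, hk, rfl⟩
      refine ⟨⟨k, by omega, rfl⟩, ⟨k - 1, by omega, ?_⟩⟩
      rw [hnorm]
      have : (1 + ((k-1:ℕ):ℤ)) = (k:ℤ) := by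
        have : 2 ≤ k := hk.1
        push_cast [Nat.cast_sub (by omega : 1 ≤ k)]
        ring
      rw [this]
  -- small case
  have hsmall : ∀ n : ℤ, |n| ≤ 1 → fa n ∩ fb n = ∅ := by
    intro n hn
    obtain ⟨hl, hr⟩ := abs_le.mp hn
    interval_cases n
    · rw [haneg (-1) (by omega), hbneg (-1) (by omega)]
      ext x
      simp only [mem_inter_iff, mem_iUnion, Finset.mem_Icc, mem_singleton_iff,
        mem_empty_iff_false, iff_false, not_and, exists_prop]
      rintro ⟨k, hk, rfl⟩ ⟨k', hk', hx'⟩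
      rw [hnorm] at hx'
      have : (k:ℤ) = 1 + k' := (keyeq _ _).mp hx'
      omega
    · rw [ha0]; simp
    · rw [hapos 1 (by omega), hbpos 1 (by omega)]
      ext x
      simp only [mem_inter_iff, mem_iUnion, Finset.mem_range, mem_singleton_iff,
        mem_empty_iff_false, iff_false, not_and, exists_prop]
      rintro ⟨k, hk, rfl⟩ ⟨k', hk', hx'⟩
      rw [hnorm] at hx'
      have : (-(k:ℤ)) = 1 + -(k':ℤ) := (keyeq _ _).mp hx'
      omega
  refine ⟨hsmall, hpos, hneg, ?_⟩
  intro H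
  have h2 := hpos 2 (by norm_num)
  have h4 := hpos 4 (by norm_num)
  have hne2 : fa 2 ∩ fb 2 ≠ univ := by
    intro hu
    have : p + (5:ℤ) • A ∈ fa 2 ∩ fb 2 := by rw [hu]; trivial
    rw [h2] at this
    simp only [mem_iUnion, Finset.mem_range, mem_singleton_iff, exists_prop] at this
    obtain ⟨k, hk, hx⟩ := this
    have : (5:ℤ) = -(k:ℤ) := (keyeq _ _).mp hx
    omega
  have hmem : p + (-1 : ℤ) • A ∈ fa (2 + 2) ∩ fb (2 + 2) := by
    show p + (-1 : ℤ) • A ∈ fa 4 ∩ fb 4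
    rw [h4]
    simp only [mem_iUnion, Finset.mem_range, mem_singleton_iff, exists_prop]
    exact ⟨1, by omega, by norm_num⟩
  have := H 2 2 hne2 hne2 hmem
  rw [h2] at this
  simp only [mem_union, mem_image, mem_iUnion, Finset.mem_range, mem_singleton_iff,
    exists_prop] at this
  rcases this with ⟨y, ⟨k, hk, rfl⟩, hy⟩ | ⟨k, hk, hx⟩
  · have hk0 : k = 0 := by omega
    subst hk0
    rw [add_assoc, ← add_zsmul] at hy
    have := (keyeq _ _).mp hy.symm
    norm_num at this
  · have : (-1:ℤ) = -(k:ℤ) := (keyeq _ _).mp hx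
    omega
end

section
/- Let 𝔠 : ℤ → Closeds(S¹) be given on ℕ with 𝔠(0) = ∅, and suppose it satisfies on positive integers in its support: (a) 𝔠(m+n) ⊆ τ⁻ᵐ𝔠(n) ∪ 𝔠(m), (b) 𝔠(m−n) ⊆ τ^{n−m}𝔠(n) ∪ 𝔠(m) for 1 ≤ n < m, (c) 𝔠(−n+m) ⊆ τⁿ(𝔠(n) ∪ 𝔠(m)) for 1 ≤ n < m. Extend 𝔠 to ℤ by 𝔠(−n) := τⁿ𝔠(n). Then the extension satisfies Cif2: 𝔠(m+n) ⊆ τ⁻ᵐ𝔠(n) ∪ 𝔠(m) for all m, n ∈ ℤ in the support. -/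
open Set

/-- A set function given on `ℕ` with `c 0 = ∅` satisfying conditions `Cif2a`, `Cif2b`,
`Cif2c` on positive integers of its support, extended to `ℤ` by `c(-n) = τⁿ c(n)`,
satisfies `Cif2` for all integers in its support. -/
theorem stmt11 (α : ℝ) (hα : Irrational (α / (2 * Real.pi)))
    (c : ℤ → Set (AddCircle (2 * Real.pi)))
    (h0 : c 0 = ∅)
    (hext : ∀ n : ℕ,
      c (-(n : ℤ)) = (fun x => x + (n : ℤ) • (α : AddCircle (2 * Real.pi))) '' c (n : ℤ))
    (hCif2a : ∀ m n : ℕ, c (m : ℤ) ≠ univ → c (n : ℤ) ≠ univ →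
      c ((m : ℤ) + n) ⊆
        ((fun x => x + (-(m : ℤ)) • (α : AddCircle (2 * Real.pi))) '' c (n : ℤ))
          ∪ c (m : ℤ))
    (hCif2b : ∀ m n : ℕ, 1 ≤ n → n < m → c (m : ℤ) ≠ univ → c (n : ℤ) ≠ univ →
      c ((m : ℤ) - n) ⊆
        ((fun x => x + ((n : ℤ) - m) • (α : AddCircle (2 * Real.pi))) '' c (n : ℤ))
          ∪ c (m : ℤ))
    (hCif2c : ∀ m n : ℕ, 1 ≤ n → n < m → c (m : ℤ) ≠ univ → c (n : ℤ) ≠ univ →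
      c (-(n : ℤ) + m) ⊆
        (fun x => x + (n : ℤ) • (α : AddCircle (2 * Real.pi))) ''
          (c (n : ℤ) ∪ c (m : ℤ))) :
    ∀ m n : ℤ, c m ≠ univ → c n ≠ univ →
      c (m + n) ⊆
        ((fun x => x + (-m) • (α : AddCircle (2 * Real.pi))) '' c n) ∪ c m := by
  set T : ℤ → Set (AddCircle (2 * Real.pi)) → Set (AddCircle (2 * Real.pi)) :=
    fun k s => (fun x => x + k • (α : AddCircle (2 * Real.pi))) '' s with hT
  have hTT : ∀ (j k : ℤ) (s : Set (AddCircle (2 * Real.pi))), T j (T k s) = T (j + k) s := by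
    intro j k s
    show _ '' (_ '' s) = _ '' s
    rw [Set.image_image]
    have he : (fun x : AddCircle (2 * Real.pi) =>
        x + k • (α : AddCircle (2 * Real.pi)) + j • (α : AddCircle (2 * Real.pi))) =
        fun x => x + (j + k) • (α : AddCircle (2 * Real.pi)) := by
      funext x
      rw [add_zsmul]
      abel
    rw [he]
  have hT0 : ∀ s, T 0 s = s := by
    intro s
    show _ '' s = s
    simp
  have hTmono : ∀ (k : ℤ) {s t : Set (AddCircle (2 * Real.pi))}, s ⊆ t → T k s ⊆ T k t := by
    intro k s t h
    exact Set.image_mono h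
  have hTunion : ∀ (k : ℤ) (s t : Set (AddCircle (2 * Real.pi))),
      T k (s ∪ t) = T k s ∪ T k t := fun k s t => Set.image_union _ s t
  have hTu : ∀ k : ℤ, T k univ = univ := by
    intro k
    show _ '' univ = univ
    rw [Set.image_univ]
    ext y
    simp only [mem_range, mem_univ, iff_true]
    exact ⟨y - k • (α : AddCircle (2 * Real.pi)), by abel⟩
  have hextT : ∀ n : ℕ, c (-(n : ℤ)) = T (n : ℤ) (c (n : ℤ)) := hext
  have hne : ∀ n : ℕ, c (-(n : ℤ)) ≠ univ → c (n : ℤ) ≠ univ := by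
    intro n h hc
    exact h (by rw [hextT n, hc, hTu])
  intro m n hm hn
  show c (m + n) ⊆ T (-m) (c n) ∪ c m
  obtain ⟨a, rfl | rfl⟩ : ∃ a : ℕ, m = a ∨ m = -a := ⟨m.natAbs, Int.natAbs_eq m⟩ <;>
    obtain ⟨b, rfl | rfl⟩ : ∃ b : ℕ, n = b ∨ n = -b := ⟨n.natAbs, Int.natAbs_eq n⟩
  · -- m = a, n = b
    exact hCif2a a b hm hn
  · -- m = a, n = -b
    have hb' : c (b : ℤ) ≠ univ := hne b hn
    rcases Nat.eq_zero_or_pos b with hb0 | hb0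
    · subst hb0
      rw [show ((a : ℤ) + -((0 : ℕ) : ℤ)) = (a : ℤ) by simp]
      exact subset_union_right
    rcases Nat.eq_zero_or_pos a with ha0 | ha0
    · subst ha0
      rw [show (((0 : ℕ) : ℤ) + -(b : ℤ)) = -(b : ℤ) by simp,
        show (-((0 : ℕ) : ℤ)) = (0 : ℤ) by simp, hT0]
      exact subset_union_left
    rcases Nat.lt_trichotomy a b with hab | hab | hab
    · -- 1 ≤ a < b : use hCif2b b a
      have hdz : ((b - a : ℕ) : ℤ) = (b : ℤ) - a := by omega
      have h1 : c ((b - a : ℕ) : ℤ) ⊆ T ((a : ℤ) - b) (c (a : ℤ)) ∪ c (b : ℤ) := by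
        have h2 := hCif2b b a ha0 hab hb' hm
        rwa [show ((b : ℤ) - a) = ((b - a : ℕ) : ℤ) from hdz.symm] at h2
      rw [show ((a : ℤ) + -(b : ℤ)) = -((b - a : ℕ) : ℤ) by omega, hextT (b - a)]
      calc T ((b - a : ℕ) : ℤ) (c ((b - a : ℕ) : ℤ))
          ⊆ T ((b - a : ℕ) : ℤ) (T ((a : ℤ) - b) (c (a : ℤ)) ∪ c (b : ℤ)) := hTmono _ h1
        _ = T (((b - a : ℕ) : ℤ) + ((a : ℤ) - b)) (c (a : ℤ))
              ∪ T ((b - a : ℕ) : ℤ) (c (b : ℤ)) := by rw [hTunion, hTT]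
        _ = T 0 (c (a : ℤ)) ∪ T ((b - a : ℕ) : ℤ) (c (b : ℤ)) := by
              rw [show (((b - a : ℕ) : ℤ) + ((a : ℤ) - b)) = 0 by omega]
        _ = c (a : ℤ) ∪ T ((b - a : ℕ) : ℤ) (c (b : ℤ)) := by rw [hT0]
        _ = T (-(a : ℤ)) (c (-(b : ℤ))) ∪ c (a : ℤ) := by
              rw [hextT b, hTT, show (-(a : ℤ) + b) = ((b - a : ℕ) : ℤ) by omega, union_comm]
    · -- a = b
      subst hab
      rw [show ((a : ℤ) + -(a : ℤ)) = 0 by ring, h0]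
      exact empty_subset _
    · -- b < a : use hCif2b a b
      rw [hextT b, hTT, show ((a : ℤ) + -(b : ℤ)) = (a : ℤ) - b by ring,
        show (-(a : ℤ) + b) = (b : ℤ) - a by ring]
      exact hCif2b a b hb0 hab hm hb'
  · -- m = -a, n = b
    have ha' : c (a : ℤ) ≠ univ := hne a hm
    rcases Nat.eq_zero_or_pos b with hb0 | hb0
    · subst hb0
      rw [show (-(a : ℤ) + ((0 : ℕ) : ℤ)) = -(a : ℤ) by simp]
      exact subset_union_right
    rcases Nat.eq_zero_or_pos a with ha0 | ha0
    · subst ha0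
      rw [show (-((0 : ℕ) : ℤ) + (b : ℤ)) = (b : ℤ) by simp,
        show (-(-((0 : ℕ) : ℤ))) = (0 : ℤ) by simp, hT0]
      exact subset_union_left
    rcases Nat.lt_trichotomy a b with hab | hab | hab
    · -- 1 ≤ a < b : use hCif2c b a
      have h1 := hCif2c b a ha0 hab hn ha'
      rw [neg_neg, hextT a, ← hTunion]
      rw [union_comm (c ((a : ℕ) : ℤ)) (c ((b : ℕ) : ℤ))] at h1
      exact h1
    · -- a = b
      subst hab
      rw [show (-(a : ℤ) + (a : ℤ)) = 0 by ring, h0]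
      exact empty_subset _
    · -- b < a : use hCif2c a b
      have hdz : ((a - b : ℕ) : ℤ) = (a : ℤ) - b := by omega
      have h1 : c ((a - b : ℕ) : ℤ) ⊆ T (b : ℤ) (c (b : ℤ) ∪ c (a : ℤ)) := by
        have h2 := hCif2c a b hb0 hab ha' hn
        rwa [show (-(b : ℤ) + a) = ((a - b : ℕ) : ℤ) by omega] at h2
      rw [show (-(a : ℤ) + (b : ℤ)) = -((a - b : ℕ) : ℤ) by omega, hextT (a - b), neg_neg]
      calc T ((a - b : ℕ) : ℤ) (c ((a - b : ℕ) : ℤ))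
          ⊆ T ((a - b : ℕ) : ℤ) (T (b : ℤ) (c (b : ℤ) ∪ c (a : ℤ))) := hTmono _ h1
        _ = T (((a - b : ℕ) : ℤ) + b) (c (b : ℤ) ∪ c (a : ℤ)) := by rw [hTT]
        _ = T (a : ℤ) (c (b : ℤ) ∪ c (a : ℤ)) := by
              rw [show (((a - b : ℕ) : ℤ) + b) = (a : ℤ) by omega]
        _ = T (a : ℤ) (c (b : ℤ)) ∪ T (a : ℤ) (c (a : ℤ)) := hTunion _ _ _
        _ = T (a : ℤ) (c (b : ℤ)) ∪ c (-(a : ℤ)) := by rw [hextT a]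
  · -- m = -a, n = -b
    have ha' : c (a : ℤ) ≠ univ := hne a hm
    have hb' : c (b : ℤ) ≠ univ := hne b hn
    have h1 := hCif2a b a hb' ha'
    rw [show (-(a : ℤ) + -(b : ℤ)) = -(((a + b : ℕ)) : ℤ) by push_cast; ring,
      hextT (a + b), neg_neg]
    calc T (((a + b : ℕ)) : ℤ) (c (((a + b : ℕ)) : ℤ))
        ⊆ T (((a + b : ℕ)) : ℤ) (T (-(b : ℤ)) (c (a : ℤ)) ∪ c (b : ℤ)) := by
          refine hTmono _ ?_
          rw [show (((a + b : ℕ)) : ℤ) = (b : ℤ) + a by push_cast; ring]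
          exact h1
      _ = T ((((a + b : ℕ)) : ℤ) + -(b : ℤ)) (c (a : ℤ))
            ∪ T (((a + b : ℕ)) : ℤ) (c (b : ℤ)) := by rw [hTunion, hTT]
      _ = T (a : ℤ) (c (a : ℤ)) ∪ T (((a + b : ℕ)) : ℤ) (c (b : ℤ)) := by
            rw [show ((((a + b : ℕ)) : ℤ) + -(b : ℤ)) = (a : ℤ) by push_cast; ring]
      _ = c (-(a : ℤ)) ∪ T (((a + b : ℕ)) : ℤ) (c (b : ℤ)) := by rw [hextT a]
      _ = T (a : ℤ) (c (-(b : ℤ))) ∪ c (-(a : ℤ)) := by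
            rw [hextT b, hTT, show ((a : ℤ) + b) = (((a + b : ℕ)) : ℤ) by push_cast; ring,
              union_comm]
end

section
/- Let G be a group, H ≤ G a subgroup, and s₁,…,sₙ elements of G. For each pair (i,j) let G(sᵢ,sⱼ) = {t ∈ G : t sᵢ t⁻¹ = sⱼ}. If G = ⋃_{i,j} G(sᵢ,sⱼ), then some sᵢ has a finite conjugacy class. -/
/-!
For each pair `(i, j)` the transporter `{t | t sᵢ t⁻¹ = sⱼ}` is empty or a left coset of the
centralizer of `sᵢ`. So `G` is covered by finitely many left cosets of these centralizers, and by
B. H. Neumann's lemma one of them, say that of `sᵢ`, has finite index. That index is the size of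
the conjugacy class of `sᵢ`.
-/

open scoped Pointwise

namespace Subgroup

variable {G : Type*} [Group G]

theorem setOf_conj_eq_smul_centralizer {a b g : G} (hg : g * a * g⁻¹ = b) :
    {t : G | t * a * t⁻¹ = b} = g • (centralizer {a} : Set G) := by
  ext t
  rw [Set.mem_smul_set_iff_inv_smul_mem, Set.mem_ofPred_eq, SetLike.mem_coe,
    mem_centralizer_singleton_iff, ← hg, smul_eq_mul]
  constructor <;> intro h
  · calc g⁻¹ * t * a = g⁻¹ * (t * a * t⁻¹) * t := by group
      _ = a * (g⁻¹ * t) := by rw [h]; group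
  · calc t * a * t⁻¹ = g * (g⁻¹ * t * a) * t⁻¹ := by group
      _ = g * a * g⁻¹ := by rw [h]; group

theorem index_centralizer_singleton (a : G) :
    (centralizer {a}).index = {b | IsConj a b}.ncard := by
  rw [centralizer_eq_comap_stabilizer]
  refine (index_comap_of_surjective (H := MulAction.stabilizer (ConjAct G) a)
    ConjAct.toConjAct.surjective).trans ?_
  rw [MulAction.index_stabilizer]
  congr 1
  ext b
  rw [ConjAct.mem_orbit_conjAct, isConj_comm, Set.mem_ofPred_eq]

theorem finite_setOf_isConj_of_finiteIndex (a : G) [(centralizer {a}).FiniteIndex] :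
    {b | IsConj a b}.Finite :=
  Set.finite_of_ncard_ne_zero (index_centralizer_singleton a ▸ FiniteIndex.index_ne_zero)

end Subgroup

/-- If a group `G` is covered by the sets `G(sᵢ,sⱼ) = {t : t sᵢ t⁻¹ = sⱼ}` for finitely
many elements `s₁, …, sₙ`, then some `sᵢ` has a finite conjugacy class. -/
theorem stmt13 {G : Type*} [Group G] {n : ℕ} (s : Fin n → G)
    (hcover : ∀ t : G, ∃ i j : Fin n, t * s i * t⁻¹ = s j) :
    ∃ i : Fin n, {g : G | IsConj (s i) g}.Finite := by
  classical
  let ι := {p : Fin n × Fin n // ∃ t : G, t * s p.1 * t⁻¹ = s p.2}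
  have hcovers : ⋃ p ∈ (Finset.univ : Finset ι),
      p.2.choose • (Subgroup.centralizer {s p.1.1} : Set G) = Set.univ := by
    refine Set.eq_univ_of_forall fun t => ?_
    obtain ⟨i, j, ht⟩ := hcover t
    let p : ι := ⟨(i, j), t, ht⟩
    refine Set.mem_biUnion (Finset.mem_univ p) ?_
    rw [← Subgroup.setOf_conj_eq_smul_centralizer p.2.choose_spec]
    exact ht
  obtain ⟨⟨⟨i, _⟩, _⟩, -, _⟩ := Subgroup.exists_finiteIndex_of_leftCoset_cover hcovers
  exact ⟨i, Subgroup.finite_setOf_isConj_of_finiteIndex (s i)⟩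
end

section
/- Let τ be rotation of S¹ by irrational α and let 𝔠 : ℤ → Closeds(S¹) be a closed ideal set function (satisfying Cif1 and Cif2) such that 𝔠(n) has empty interior for every n in the support of 𝔠. Suppose 𝔧 : ℤ → Closeds(S¹) satisfies 𝔧(n) ⊇ 𝔠(n) for all n, Cif1 (𝔧(−n) = τⁿ𝔧(n)), Cif2(𝔠): 𝔧(m+n) ⊆ τ⁻ᵐ𝔧(n) ∪ 𝔠(m) for m ∈ supp(𝔠), n ∈ supp(𝔧), and that ∅ ≠ 𝔧(0) ≠ S¹. Then supp(𝔧) = supp(𝔠). -/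
open Set

/-- If `c` is a closed ideal set function with nowhere dense values on its support, and
`j` is a closed `c`-ideal set function with `∅ ≠ j 0 ≠ S¹`, then
`supp(j) = supp(c)`. -/
theorem stmt16 (α : ℝ) (hα : Irrational (α / (2 * Real.pi)))
    (c j : ℤ → Set (AddCircle (2 * Real.pi)))
    (hcclosed : ∀ n : ℤ, IsClosed (c n))
    (hjclosed : ∀ n : ℤ, IsClosed (j n))
    (hc0 : c 0 = ∅)
    (hcCif1 : ∀ n : ℤ,
      c (-n) = (fun x => x + n • (α : AddCircle (2 * Real.pi))) '' c n)
    (hcCif2 : ∀ m n : ℤ, c m ≠ univ → c n ≠ univ →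
      c (m + n) ⊆ ((fun x => x + (-m) • (α : AddCircle (2 * Real.pi))) '' c n) ∪ c m)
    (hcND : ∀ n : ℤ, c n ≠ univ → interior (c n) = ∅)
    (hjc : ∀ n : ℤ, c n ⊆ j n)
    (hjCif1 : ∀ n : ℤ,
      j (-n) = (fun x => x + n • (α : AddCircle (2 * Real.pi))) '' j n)
    (hjCif2 : ∀ m n : ℤ, c m ≠ univ → j n ≠ univ →
      j (m + n) ⊆ ((fun x => x + (-m) • (α : AddCircle (2 * Real.pi))) '' j n) ∪ c m)
    (hj0ne : j 0 ≠ ∅) (hj0nu : j 0 ≠ univ) :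
    {n : ℤ | j n ≠ univ} = {n : ℤ | c n ≠ univ} := by
  ext n
  simp only [mem_setOf_eq]
  constructor
  · intro hj hcn
    exact hj (univ_subset_iff.mp (hcn ▸ hjc n))
  · intro hcn hjn
    have h := hjCif2 n 0 hcn hj0nu
    rw [add_zero, hjn] at h
    set v := (-n) • (α : AddCircle (2 * Real.pi)) with hv
    have himgne : (fun x => x + v) '' j 0 ≠ univ := by
      intro hu
      apply hj0nu
      rw [eq_univ_iff_forall]
      intro y
      have hm : y + v ∈ (fun x => x + v) '' j 0 := hu ▸ mem_univ _
      obtain ⟨x, hx, hxe⟩ := hm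
      have hxy : x = y := add_right_cancel hxe
      rwa [← hxy]
    have himgclosed : IsClosed ((fun x => x + v) '' j 0) :=
      (Homeomorph.addRight v).isClosedMap _ (hjclosed 0)
    obtain ⟨y, hy⟩ : ∃ y, y ∉ (fun x => x + v) '' j 0 := by
      by_contra hcon
      push_neg at hcon
      exact himgne (eq_univ_iff_forall.mpr hcon)
    have hopen : IsOpen ((fun x => x + v) '' j 0)ᶜ := himgclosed.isOpen_compl
    have hsub : ((fun x => x + v) '' j 0)ᶜ ⊆ c n := by
      intro x hx
      rcases h (mem_univ x) with h1 | h2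
      · exact absurd h1 hx
      · exact h2
    have hint : ((fun x => x + v) '' j 0)ᶜ ⊆ interior (c n) :=
      interior_maximal hsub hopen
    rw [hcND n hcn] at hint
    exact hint hy
end

section
/- Let τ be rotation of S¹ by irrational α, 𝔠 a closed ideal set function with every 𝔠(n) (n in support) nowhere dense, and 𝔧 a closed 𝔠-ideal set function with ∅ ≠ 𝔧(0) ≠ S¹. Let Ω = ⋃_{m,n ∈ supp(𝔠)} τᵐ 𝔠(n) and r ≥ 1 with supp(𝔠) = rℤ. Then 𝔧(0) \ Ω ⊆ τ⁻ʳ(𝔧(0) \ Ω), and consequently 𝔧(0) ⊆ Ω; in particular 𝔧(0) is meager. -/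
open Set

private lemma isMeagre_iUnion' {X : Type*} [TopologicalSpace X] {ι : Type*} [Countable ι]
    {s : ι → Set X} (hs : ∀ i, IsMeagre (s i)) : IsMeagre (⋃ i, s i) := by
  rw [IsMeagre, compl_iUnion]
  exact (countable_iInter_mem).mpr hs

private lemma isMeagre_iUnion_prop {X : Type*} [TopologicalSpace X] {P : Prop}
    {s : P → Set X} (hs : ∀ h : P, IsMeagre (s h)) : IsMeagre (⋃ h : P, s h) := by
  by_cases h : P
  · simpa [h] using hs h
  · simp [h, IsMeagre.empty]

private lemma isMeagre_translate {G : Type*} [AddCommGroup G] [TopologicalSpace G]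
    [IsTopologicalAddGroup G] (v : G) {s : Set G} (hclosed : IsClosed s)
    (hint : interior s = ∅) : IsMeagre ((fun x => x + v) '' s) := by
  have hh : (fun x : G => x + v) = ⇑(Homeomorph.addRight v) := rfl
  have hcl : IsClosed ((fun x : G => x + v) '' s) := by
    rw [hh]; exact (Homeomorph.addRight v).isClosedMap _ hclosed
  have hi : interior ((fun x : G => x + v) '' s) = ∅ := by
    rw [hh, ← Homeomorph.image_interior, hint, image_empty]
  rw [isMeagre_iff_countable_union_isNowhereDense]
  exact ⟨{(fun x : G => x + v) '' s}, by
    rintro t rfl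
    exact hcl.isNowhereDense_iff.mpr hi, countable_singleton _, by simp⟩

private lemma dense_zmult_range (α : ℝ) (hα : Irrational (α / (2 * Real.pi))) (r : ℕ)
    (hr : 1 ≤ r) :
    Dense (range fun k : ℤ => k • ((r : ℤ) • (α : AddCircle (2 * Real.pi)))) := by
  set p : ℝ := 2 * Real.pi with hp
  have hpne : p ≠ 0 := by positivity
  have hrne : (r : ℝ) ≠ 0 := by positivity
  set S : AddSubgroup ℝ := AddSubgroup.zmultiples ((r : ℝ) * α) ⊔ AddSubgroup.zmultiples p
    with hS
  have hdS : Dense (S : Set ℝ) := by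
    rcases AddSubgroup.dense_or_cyclic S with h | ⟨g, hg⟩
    · exact h
    · exfalso
      rw [← AddSubgroup.zmultiples_eq_closure] at hg
      have h1 : (r : ℝ) * α ∈ S := AddSubgroup.mem_sup_left (AddSubgroup.mem_zmultiples _)
      have h2 : p ∈ S := AddSubgroup.mem_sup_right (AddSubgroup.mem_zmultiples _)
      rw [hg] at h1 h2
      obtain ⟨m, hm⟩ := AddSubgroup.mem_zmultiples_iff.mp h1
      obtain ⟨n, hn⟩ := AddSubgroup.mem_zmultiples_iff.mp h2
      rw [zsmul_eq_mul] at hm hn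
      have hn0 : (n : ℝ) ≠ 0 := by
        intro h; rw [h, zero_mul] at hn; exact hpne hn.symm
      apply hα
      refine ⟨(m : ℚ) / ((n : ℚ) * (r : ℚ)), ?_⟩
      have key : α * ((n : ℝ) * (r : ℝ)) = (m : ℝ) * p := by
        calc α * ((n : ℝ) * (r : ℝ)) = (n : ℝ) * ((r : ℝ) * α) := by ring
        _ = (n : ℝ) * ((m : ℝ) * g) := by rw [hm]
        _ = (m : ℝ) * ((n : ℝ) * g) := by ring
        _ = (m : ℝ) * p := by rw [hn]
      push_cast
      rw [div_eq_div_iff (by positivity) hpne]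
      linarith [key]
  have hq : Continuous ((↑) : ℝ → AddCircle p) := continuous_quotient_mk'
  have hqd : DenseRange ((↑) : ℝ → AddCircle p) := QuotientAddGroup.mk_surjective.denseRange
  have hd2 : Dense (((↑) : ℝ → AddCircle p) '' (S : Set ℝ)) := hqd.dense_image hq hdS
  refine hd2.mono ?_
  rintro _ ⟨x, hx, rfl⟩
  rcases AddSubgroup.mem_sup.mp hx with ⟨y, hy, z, hz, rfl⟩
  obtain ⟨m, rfl⟩ := AddSubgroup.mem_zmultiples_iff.mp hy
  obtain ⟨n, rfl⟩ := AddSubgroup.mem_zmultiples_iff.mp hz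
  refine ⟨m, ?_⟩
  have hmem : n • p ∈ AddSubgroup.zmultiples p :=
    AddSubgroup.zsmul_mem _ (AddSubgroup.mem_zmultiples p) n
  rw [QuotientAddGroup.mk_add_of_mem _ hmem, AddCircle.coe_zsmul, ← AddCircle.coe_zsmul,
    zsmul_eq_mul]
  norm_num

/-- With `Ω = ⋃_{m,n ∈ supp(c)} τᵐ c(n)` and `supp(c) = rℤ`, the set `j 0 \ Ω` satisfies
`j 0 \ Ω ⊆ τ⁻ʳ(j 0 \ Ω)`; consequently `j 0 ⊆ Ω` and `j 0` is meagre. -/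
theorem stmt17 (α : ℝ) (hα : Irrational (α / (2 * Real.pi)))
    (c j : ℤ → Set (AddCircle (2 * Real.pi)))
    (hcclosed : ∀ n : ℤ, IsClosed (c n))
    (hjclosed : ∀ n : ℤ, IsClosed (j n))
    (hc0 : c 0 = ∅)
    (hcCif1 : ∀ n : ℤ,
      c (-n) = (fun x => x + n • (α : AddCircle (2 * Real.pi))) '' c n)
    (hcCif2 : ∀ m n : ℤ, c m ≠ univ → c n ≠ univ →
      c (m + n) ⊆ ((fun x => x + (-m) • (α : AddCircle (2 * Real.pi))) '' c n) ∪ c m)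
    (hcND : ∀ n : ℤ, c n ≠ univ → interior (c n) = ∅)
    (hjc : ∀ n : ℤ, c n ⊆ j n)
    (hjCif1 : ∀ n : ℤ,
      j (-n) = (fun x => x + n • (α : AddCircle (2 * Real.pi))) '' j n)
    (hjCif2 : ∀ m n : ℤ, c m ≠ univ → j n ≠ univ →
      j (m + n) ⊆ ((fun x => x + (-m) • (α : AddCircle (2 * Real.pi))) '' j n) ∪ c m)
    (hj0ne : j 0 ≠ ∅) (hj0nu : j 0 ≠ univ)
    (r : ℕ) (hr : 1 ≤ r)
    (hsupp : ∀ n : ℤ, c n ≠ univ ↔ (r : ℤ) ∣ n) :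
    (j 0 \ (⋃ (m : ℤ) (_ : c m ≠ univ) (n : ℤ) (_ : c n ≠ univ),
        (fun x => x + m • (α : AddCircle (2 * Real.pi))) '' c n)
      ⊆ (fun x => x + (-(r : ℤ)) • (α : AddCircle (2 * Real.pi))) ''
        (j 0 \ (⋃ (m : ℤ) (_ : c m ≠ univ) (n : ℤ) (_ : c n ≠ univ),
          (fun x => x + m • (α : AddCircle (2 * Real.pi))) '' c n))) ∧
    (j 0 ⊆ ⋃ (m : ℤ) (_ : c m ≠ univ) (n : ℤ) (_ : c n ≠ univ),
        (fun x => x + m • (α : AddCircle (2 * Real.pi))) '' c n) ∧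
    IsMeagre (j 0) := by
  set a : AddCircle (2 * Real.pi) := (α : AddCircle (2 * Real.pi)) with ha
  set Ω : Set (AddCircle (2 * Real.pi)) :=
    ⋃ (m : ℤ) (_ : c m ≠ univ) (n : ℤ) (_ : c n ≠ univ), (fun x => x + m • a) '' c n with hΩ
  have hcne : ∀ k : ℤ, (r : ℤ) ∣ k → c k ≠ univ := fun k h => (hsupp k).mpr h
  have hcr : c (r : ℤ) ≠ univ := hcne _ dvd_rfl
  have hc0ne : c 0 ≠ univ := by rw [hc0]; exact empty_ne_univ
  have hcΩ : ∀ k : ℤ, c k ≠ univ → c k ⊆ Ω := by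
    intro k hk x hx
    rw [hΩ]
    exact mem_iUnion.mpr ⟨0, mem_iUnion.mpr ⟨hc0ne, mem_iUnion.mpr ⟨k, mem_iUnion.mpr
      ⟨hk, ⟨x, hx, by simp⟩⟩⟩⟩⟩
  have hΩinv : ∀ k : ℤ, (r : ℤ) ∣ k → ∀ x, x + k • a ∈ Ω → x ∈ Ω := by
    intro k hdk x hx
    rw [hΩ] at hx ⊢
    simp only [mem_iUnion, mem_image] at hx ⊢
    obtain ⟨m, hm, n, hn, z, hz, hzx⟩ := hx
    refine ⟨m - k, hcne _ (dvd_sub ((hsupp m).mp hm) hdk), n, hn, z, hz, ?_⟩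
    have h1 : z + (m - k) • a = z + m • a - k • a := by rw [sub_smul]; abel
    rw [h1, hzx]; abel
  have hjru : j (r : ℤ) ≠ univ := by
    intro h
    have h2 := hjCif2 (r : ℤ) 0 hcr hj0nu
    rw [add_zero, h] at h2
    have hA : IsClosed ((fun x => x + (-(r : ℤ)) • a) '' j 0) :=
      (Homeomorph.addRight ((-(r : ℤ)) • a)).isClosedMap _ (hjclosed 0)
    have hAne : ((fun x => x + (-(r : ℤ)) • a) '' j 0) ≠ univ := by
      intro hu
      apply hj0nu
      rw [eq_univ_iff_forall]
      intro y
      have hmem : y + (-(r : ℤ)) • a ∈ (fun x => x + (-(r : ℤ)) • a) '' j 0 := hu ▸ mem_univ _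
      obtain ⟨w, hw, hwy⟩ := hmem
      rwa [← add_right_cancel hwy]
    obtain ⟨y, hy⟩ := nonempty_compl.mpr hAne
    have hsubc : ((fun x => x + (-(r : ℤ)) • a) '' j 0)ᶜ ⊆ c (r : ℤ) := by
      intro z hz
      rcases h2 (mem_univ z) with h' | h'
      · exact absurd h' hz
      · exact h'
    have hin : ((fun x => x + (-(r : ℤ)) • a) '' j 0)ᶜ ⊆ interior (c (r : ℤ)) :=
      interior_maximal hsubc hA.isOpen_compl
    rw [hcND _ hcr] at hin
    exact hin hy
  have hjmru : j (-(r : ℤ)) ≠ univ := by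
    intro h
    apply hjru
    rw [hjCif1 (r : ℤ)] at h
    rw [eq_univ_iff_forall]
    intro x
    have hmem : x + (r : ℤ) • a ∈ (fun y => y + (r : ℤ) • a) '' j (r : ℤ) := h ▸ mem_univ _
    obtain ⟨w, hw, hwy⟩ := hmem
    rwa [← add_right_cancel hwy]
  have step : ∀ k : ℤ, c k ≠ univ → j (-k) ≠ univ → ∀ x, x ∈ j 0 \ Ω → x + k • a ∈ j 0 \ Ω := by
    intro k hck hjmk x hx
    obtain ⟨hxj, hxΩ⟩ := hx
    have hxck : x ∉ c k := fun h => hxΩ (hcΩ k hck h)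
    have h1 := hjCif2 k (-k) hck hjmk
    rw [add_neg_cancel] at h1
    have him : (fun y => y + (-k) • a) '' j (-k) = j k := by
      rw [hjCif1 k, Set.image_image]
      simp [neg_smul]
    rw [him] at h1
    have hxjk : x ∈ j k := (h1 hxj).resolve_right hxck
    have h2 := hjCif2 k 0 hck hj0nu
    rw [add_zero] at h2
    obtain ⟨y, hy, hyx⟩ := (h2 hxjk).resolve_right hxck
    have hyeq : y = x + k • a := by
      rw [← hyx]; simp [neg_smul]
    exact ⟨hyeq ▸ hy, fun hmem => hxΩ (hΩinv k ((hsupp k).mp hck) x hmem)⟩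
  have part1 : j 0 \ Ω ⊆ (fun x => x + (-(r : ℤ)) • a) '' (j 0 \ Ω) := by
    intro x hx
    exact ⟨x + (r : ℤ) • a, step _ hcr hjmru x hx, by simp [neg_smul]⟩
  have hcmr : c (-(r : ℤ)) ≠ univ := hcne _ (dvd_neg.mpr dvd_rfl)
  have hjr' : j (-(-(r : ℤ))) ≠ univ := by rw [neg_neg]; exact hjru
  have part2 : j 0 ⊆ Ω := by
    by_contra hcon
    obtain ⟨x, hxj, hxΩ⟩ := not_subset.mp hcon
    have horb : ∀ n : ℤ, x + (n * (r : ℤ)) • a ∈ j 0 \ Ω := by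
      intro n
      induction n using Int.induction_on with
      | zero =>
          have hx0 : x ∈ j 0 \ Ω := ⟨hxj, hxΩ⟩
          simpa using hx0
      | succ n ih =>
          have h := step _ hcr hjmru _ ih
          have he : x + (((n : ℤ) + 1) * (r : ℤ)) • a
              = x + ((n : ℤ) * (r : ℤ)) • a + (r : ℤ) • a := by
            rw [add_mul, one_mul, add_smul]; abel
          rwa [he]
      | pred n ih =>
          have h := step _ hcmr hjr' _ ih
          have he : x + ((-(n : ℤ) - 1) * (r : ℤ)) • a
              = x + (-(n : ℤ) * (r : ℤ)) • a + (-(r : ℤ)) • a := by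
            rw [sub_mul, one_mul, sub_smul, neg_smul]; abel
          rwa [he]
    have hsubr : range (fun k : ℤ => x + k • ((r : ℤ) • a)) ⊆ j 0 := by
      rintro _ ⟨k, rfl⟩
      have hk := (horb k).1
      rwa [mul_smul] at hk
    have hdr : Dense (range fun k : ℤ => x + k • ((r : ℤ) • a)) := by
      have h0 := dense_zmult_range α hα r hr
      have heq : range (fun k : ℤ => x + k • ((r : ℤ) • a))
          = (fun y => x + y) '' (range fun k : ℤ => k • ((r : ℤ) • a)) := by
        rw [← range_comp]
        rfl
      rw [heq]
      exact (Homeomorph.addLeft x).surjective.denseRange.dense_image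
        (Homeomorph.addLeft x).continuous h0
    have huniv : (univ : Set (AddCircle (2 * Real.pi))) ⊆ j 0 := by
      rw [← hdr.closure_eq]
      exact closure_minimal hsubr (hjclosed 0)
    exact hj0nu (univ_subset_iff.mp huniv)
  have hΩmeagre : IsMeagre Ω := by
    rw [hΩ]
    apply isMeagre_iUnion'; intro m
    apply isMeagre_iUnion_prop; intro hm
    apply isMeagre_iUnion'; intro n
    apply isMeagre_iUnion_prop; intro hn
    exact isMeagre_translate _ (hcclosed n) (hcND n hn)
  exact ⟨part1, part2, hΩmeagre.mono part2⟩
end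

section
/- Let τ be rotation of S¹ by irrational α. Suppose 𝔠 is a closed ideal set function with nowhere dense values on its support, q ∈ supp(𝔠) \ {0} with 𝔠(q) a singleton {p}, and 𝔧 is a closed 𝔠-ideal set function with M := 𝔧(0) satisfying ∅ ≠ M ≠ S¹. Then for every k ∈ supp(𝔠) \ {0} we have ∅ ≠ M ∩ 𝔠(k) ≠ 𝔠(k); applied to k = q this is a contradiction, so no such 𝔧 exists (the corresponding algebra is simple). -/
set_option maxHeartbeats 1000000

open Set

local notation "G" => AddCircle (2 * Real.pi)

lemma coe_surj : Function.Surjective ((↑) : ℝ → G) := QuotientAddGroup.mk_surjective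

/-- Density of an irrational ℤ-orbit. -/
lemma dense_orbit {g : G} (hg : ∀ k : ℤ, k ≠ 0 → k • g ≠ 0) (y : G) :
    Dense (range fun n : ℤ => y + n • g) := by
  obtain ⟨r, rfl⟩ := coe_surj g
  have hcont : Continuous ((↑) : ℝ → G) := AddCircle.continuous_mk' _
  rcases AddSubgroup.dense_or_cyclic (AddSubgroup.closure {r, 2 * Real.pi}) with hd | ⟨d, hScyc⟩
  · have himg : Dense (((↑) : ℝ → G) '' (AddSubgroup.closure {r, 2 * Real.pi} : Set ℝ)) :=
      coe_surj.denseRange.dense_image hcont hd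
    have hsub : (((↑) : ℝ → G) '' (AddSubgroup.closure {r, 2 * Real.pi} : Set ℝ))
        ⊆ range fun n : ℤ => n • ((r : G)) := by
      rintro _ ⟨x, hx, rfl⟩
      rw [SetLike.mem_coe, AddSubgroup.mem_closure_pair] at hx
      obtain ⟨m, n, rfl⟩ := hx
      refine ⟨m, ?_⟩
      have h1 : ((n • (2 * Real.pi) : ℝ) : G) = 0 := by
        rw [AddCircle.coe_zsmul, AddCircle.coe_period, smul_zero]
      show m • ((r : ℝ) : G) = _
      rw [AddCircle.coe_add, h1, add_zero, AddCircle.coe_zsmul]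
    have hd2 : Dense (range fun n : ℤ => n • ((r : G))) := himg.mono hsub
    have hsurj2 : Function.Surjective (fun x : G => y + x) := fun z => ⟨z - y, by simp⟩
    have := hsurj2.denseRange.dense_image (by fun_prop) hd2
    have heq : (fun x : G => y + x) '' (range fun n : ℤ => n • ((r : G)))
        = range fun n : ℤ => y + n • ((r : G)) := by
      rw [← range_comp]; rfl
    rwa [heq] at this
  · exfalso
    have hr : r ∈ AddSubgroup.closure {r, 2 * Real.pi} :=
      AddSubgroup.subset_closure (by simp)
    have hp : 2 * Real.pi ∈ AddSubgroup.closure {r, 2 * Real.pi} :=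
      AddSubgroup.subset_closure (by simp)
    rw [hScyc, AddSubgroup.mem_closure_singleton] at hr hp
    obtain ⟨m, hm⟩ := hr
    obtain ⟨n, hn⟩ := hp
    have hn0 : n ≠ 0 := by
      rintro rfl
      simp at hn
    refine hg n hn0 ?_
    rw [← AddCircle.coe_zsmul, ← hm, smul_comm, hn, AddCircle.coe_zsmul,
      AddCircle.coe_period, smul_zero]

/-- A nonempty closed set containing a forward irrational orbit is everything. -/
lemma closed_forward_orbit_univ {M : Set G} (hM : IsClosed M)
    {v : G} (hv : ∀ k : ℤ, k ≠ 0 → k • v ≠ 0)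
    {y : G} (hy : ∀ n : ℕ, y + n • v ∈ M) : M = univ := by
  haveI : Fact (0 < 2 * Real.pi) := ⟨by positivity⟩
  set C : Set G := closure (range fun n : ℕ => y + n • v) with hC
  have hCM : C ⊆ M := closure_minimal (range_subset_iff.mpr hy) hM
  have hCcl : IsClosed C := isClosed_closure
  have hCne : C.Nonempty := ⟨y + (0 : ℕ) • v, subset_closure ⟨0, rfl⟩⟩
  have hCv : ∀ x ∈ C, x + v ∈ C := by
    intro x hx
    have h1 : (fun x => x + v) '' C ⊆ C := by
      refine Subset.trans (image_closure_subset_closure_image (by fun_prop)) ?_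
      apply closure_mono
      rintro _ ⟨_, ⟨n, rfl⟩, rfl⟩
      exact ⟨n + 1, by push_cast [succ_nsmul]; rw [add_assoc]⟩
    exact h1 ⟨x, hx, rfl⟩
  set D : ℕ → Set G := fun n => (fun x => x + n • v) '' C with hD
  have hDmem : ∀ n x, x ∈ D n ↔ ∃ c ∈ C, c + n • v = x := by
    intro n x; constructor
    · rintro ⟨c, hc, rfl⟩; exact ⟨c, hc, rfl⟩
    · rintro ⟨c, hc, rfl⟩; exact ⟨c, hc, rfl⟩
  have hDsub : ∀ n, D (n + 1) ⊆ D n := by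
    intro n x hx
    rw [hDmem] at hx ⊢
    obtain ⟨c, hc, rfl⟩ := hx
    exact ⟨c + v, hCv c hc, by rw [succ_nsmul, ← add_assoc, add_right_comm]⟩
  have hDcl : ∀ n, IsClosed (D n) := fun n =>
    (Homeomorph.addRight ((n : ℕ) • v)).isClosedMap _ hCcl
  have hDcpt : IsCompact (D 0) := (hDcl 0).isCompact
  have hDne : ∀ n, (D n).Nonempty := fun n => hCne.image _
  obtain ⟨z, hz⟩ := IsCompact.nonempty_iInter_of_sequence_nonempty_isCompact_isClosed
    D hDsub hDne hDcpt hDcl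
  have hDC : ∀ n, D n ⊆ C := by
    intro n
    induction n with
    | zero => intro x hx; rw [hDmem] at hx; obtain ⟨c, hc, rfl⟩ := hx; simpa using hc
    | succ k ih => exact (hDsub k).trans ih
  have hNM : (⋂ n, D n) ⊆ M := ((iInter_subset D 0).trans (hDC 0)).trans hCM
  have hN1 : ∀ x ∈ ⋂ n, D n, x + v ∈ ⋂ n, D n := by
    intro x hx
    rw [mem_iInter] at hx ⊢
    intro n
    obtain ⟨c, hc, rfl⟩ := (hDmem n _).mp (hx n)
    exact (hDmem n _).mpr ⟨c + v, hCv c hc, by rw [add_right_comm]⟩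
  have hN2 : ∀ x : G, x + v ∈ ⋂ n, D n → x ∈ ⋂ n, D n := by
    intro x hx
    rw [mem_iInter] at hx ⊢
    intro n
    obtain ⟨c, hc, hceq⟩ := (hDmem (n + 1) _).mp (hx (n + 1))
    refine (hDmem n _).mpr ⟨c, hc, ?_⟩
    have : c + n • v + v = x + v := by rw [← hceq, succ_nsmul, ← add_assoc]
    exact add_right_cancel this
  have hall : ∀ k : ℤ, z + k • v ∈ ⋂ n, D n := by
    intro k
    induction k using Int.induction_on with
    | zero => simpa using hz
    | succ k ih =>
      have := hN1 _ ih
      rwa [add_assoc, ← add_one_zsmul] at this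
      
    | pred k ih =>
      refine hN2 _ ?_
      rwa [add_assoc, ← add_one_zsmul, sub_add_cancel]
  have hsub : (range fun k : ℤ => z + k • v) ⊆ M :=
    range_subset_iff.mpr fun k => hNM (hall k)
  have : Dense M := ((dense_orbit hv z).mono hsub)
  rw [← hM.closure_eq, this.closure_eq]

lemma img_img (v : G) (S : Set G) : (fun x => x + -v) '' ((fun x => x + v) '' S) = S := by
  rw [← image_comp]
  have h : ((fun x : G => x + -v) ∘ fun x : G => x + v) = id := by
    funext x; simp
  rw [h, image_id]

lemma img_univ_iff (v : G) (S : Set G) : (fun x => x + v) '' S = univ ↔ S = univ := by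
  constructor
  · intro h
    have := congrArg (fun T => (fun x : G => x + -v) '' T) h
    simp only [img_img] at this
    have hsurj : Function.Surjective (fun x : G => x + -v) := fun z => ⟨z + v, by simp⟩
    rw [this, image_univ, hsurj.range_eq]
  · intro h
    have hsurj : Function.Surjective (fun x : G => x + v) := fun z => ⟨z + -v, by simp⟩
    rw [h, image_univ, hsurj.range_eq]


/-- If `c` is a closed ideal set function with nowhere dense values on its support and
`c q = {p}` is a singleton for some `q ≠ 0` in the support, then there is no closed
`c`-ideal set function `j` with `∅ ≠ j 0 ≠ S¹` (so the corresponding algebra is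
simple). -/
theorem stmt18 (α : ℝ) (hα : Irrational (α / (2 * Real.pi)))
    (c j : ℤ → Set (AddCircle (2 * Real.pi)))
    (hcclosed : ∀ n : ℤ, IsClosed (c n))
    (hjclosed : ∀ n : ℤ, IsClosed (j n))
    (hc0 : c 0 = ∅)
    (hcCif1 : ∀ n : ℤ,
      c (-n) = (fun x => x + n • (α : AddCircle (2 * Real.pi))) '' c n)
    (hcCif2 : ∀ m n : ℤ, c m ≠ univ → c n ≠ univ →
      c (m + n) ⊆ ((fun x => x + (-m) • (α : AddCircle (2 * Real.pi))) '' c n) ∪ c m)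
    (hcND : ∀ n : ℤ, c n ≠ univ → interior (c n) = ∅)
    (q : ℤ) (hq : q ≠ 0) (hqsupp : c q ≠ univ)
    (p : AddCircle (2 * Real.pi)) (hcq : c q = {p})
    (hjc : ∀ n : ℤ, c n ⊆ j n)
    (hjCif1 : ∀ n : ℤ,
      j (-n) = (fun x => x + n • (α : AddCircle (2 * Real.pi))) '' j n)
    (hjCif2 : ∀ m n : ℤ, c m ≠ univ → j n ≠ univ →
      j (m + n) ⊆ ((fun x => x + (-m) • (α : AddCircle (2 * Real.pi))) '' j n) ∪ c m)
    (hj0ne : j 0 ≠ ∅) (hj0nu : j 0 ≠ univ) :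
    False := by
  set a : G := (α : G) with ha
  -- irrationality: no nonzero multiple of `a` vanishes
  have hnza : ∀ k : ℤ, k ≠ 0 → k • a ≠ 0 := by
    intro k hk h
    rw [ha, ← AddCircle.coe_zsmul, AddCircle.coe_eq_zero_iff] at h
    obtain ⟨n, hn⟩ := h
    have hπ : (2 * Real.pi) ≠ 0 := by positivity
    have hk' : (k : ℝ) ≠ 0 := Int.cast_ne_zero.mpr hk
    have hn' : (n : ℝ) * (2 * Real.pi) = (k : ℝ) * α := by
      have := hn
      rw [zsmul_eq_mul, zsmul_eq_mul] at this
      exact_mod_cast this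
    refine hα ⟨(n : ℚ) / (k : ℚ), ?_⟩
    push_cast
    field_simp
    linarith
  have hv : ∀ k : ℤ, k ≠ 0 → k • (q • a) ≠ 0 := by
    intro k hk
    rw [smul_smul]
    exact hnza (k * q) (mul_ne_zero hk hq)
  have hvneg : ∀ k : ℤ, k ≠ 0 → k • (-(q • a)) ≠ 0 := by
    intro k hk h
    rw [smul_neg, neg_eq_zero] at h
    exact hv k hk h
  -- Step 1 : j k is proper whenever c k is proper
  have step1 : ∀ k : ℤ, c k ≠ univ → j k ≠ univ := by
    intro k hck hjk
    have h := hjCif2 k 0 hck hj0nu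
    rw [add_zero, hjk] at h
    have hdc : Dense (c k)ᶜ := interior_eq_empty_iff_dense_compl.mp (hcND k hck)
    have hdense : Dense ((fun x => x + (-k) • a) '' j 0) :=
      hdc.mono fun x hx => (h (mem_univ x)).resolve_right hx
    have hcl : IsClosed ((fun x => x + (-k) • a) '' j 0) :=
      (Homeomorph.addRight ((-k) • a)).isClosedMap _ (hjclosed 0)
    have : (fun x => x + (-k) • a) '' j 0 = univ := by
      rw [← hcl.closure_eq, hdense.closure_eq]
    exact hj0nu ((img_univ_iff _ _).mp this)
  -- Step 2 : the key inclusion  M ⊆ τ⁻ᵏM ∪ c k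
  have step2 : ∀ k : ℤ, c k ≠ univ →
      j 0 ⊆ ((fun x => x + (-k) • a) '' j 0) ∪ c k := by
    intro k hck
    have hjk := step1 k hck
    have hjmk : j (-k) = (fun x => x + k • a) '' j k := hjCif1 k
    have hjmkne : j (-k) ≠ univ := by
      rw [hjmk]; exact fun h => hjk ((img_univ_iff _ _).mp h)
    have h2 := hjCif2 k (-k) hck hjmkne
    rw [add_neg_cancel, hjmk] at h2
    have himg : (fun x => x + (-k) • a) '' ((fun x => x + k • a) '' j k) = j k := by
      rw [neg_smul]; exact img_img (k • a) (j k)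
    rw [himg] at h2
    have h3 := hjCif2 k 0 hck hj0nu
    rw [add_zero] at h3
    intro x hx
    rcases h2 hx with hx' | hx'
    · exact h3 hx'
    · exact Or.inr hx'
  -- the two elementwise moves
  have hR1 : ∀ y ∈ j 0, y ≠ p → y + q • a ∈ j 0 := by
    intro y hy hyp
    have h := step2 q hqsupp
    rw [hcq] at h
    rcases h hy with ⟨x, hx, hxy⟩ | hx'
    · have : x = y + q • a := by
        rw [← hxy, neg_smul, add_assoc, neg_add_cancel, add_zero]
      rwa [← this]
    · exact absurd hx' hyp
  have hcmq : c (-q) = {p + q • a} := by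
    rw [hcCif1 q, hcq, image_singleton]
  have hcmqne : c (-q) ≠ univ := by
    rw [hcmq]
    intro h
    have hmem : p + q • a + q • a ∈ ({p + q • a} : Set G) := h ▸ mem_univ _
    rw [mem_singleton_iff] at hmem
    have : q • a = 0 := by
      have := hmem
      nth_rewrite 2 [← add_zero (p + q • a)] at this
      exact add_left_cancel this
    exact hnza q hq this
  have hR2 : ∀ y ∈ j 0, y ≠ p + q • a → y + -(q • a) ∈ j 0 := by
    intro y hy hyp
    have h := step2 (-q) hcmqne
    rw [neg_neg, hcmq] at h
    rcases h hy with ⟨x, hx, hxy⟩ | hx'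
    · have : x = y + -(q • a) := by
        rw [← hxy, add_assoc, add_neg_cancel, add_zero]
      rwa [← this]
    · exact absurd hx' hyp
  -- case analysis on whether p ∈ M
  by_cases hpM : p ∈ j 0
  · -- backward orbit of p stays in M
    have horb : ∀ n : ℕ, p + n • (-(q • a)) ∈ j 0 := by
      intro n
      induction n with
      | zero => simpa using hpM
      | succ k ih =>
        have hne : p + k • (-(q • a)) ≠ p + q • a := by
          intro h
          have h2 : (k : ℤ) • (-(q • a)) = q • a := by
            have := add_left_cancel h
            rwa [natCast_zsmul]
          have h3 : ((k : ℤ) + 1) • (-(q • a)) = 0 := by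
            rw [add_zsmul, h2, one_zsmul, add_neg_cancel]
          exact hvneg ((k : ℤ) + 1) (by omega) h3
        have := hR2 _ ih hne
        rwa [succ_nsmul, ← add_assoc]
    exact hj0nu (closed_forward_orbit_univ (hjclosed 0) hvneg horb)
  · -- forward orbit of any point of M stays in M
    obtain ⟨y, hy⟩ := nonempty_iff_ne_empty.mpr hj0ne
    have horb : ∀ n : ℕ, y + n • (q • a) ∈ j 0 := by
      intro n
      induction n with
      | zero => simpa using hy
      | succ k ih =>
        have hne : y + k • (q • a) ≠ p := fun h => hpM (h ▸ ih)
        have := hR1 _ ih hne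
        rwa [succ_nsmul, ← add_assoc]
    exact hj0nu (closed_forward_orbit_univ (hjclosed 0) hv horb)
end
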